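/- arXiv:math/0506491 — 5 statements merged into one kernel-verified Lean document; each statement's English description precedes it below -/
import Mathlib

section
/- Let H = (H^A ⊗ H^B) ⊕ K be a fixed decomposition of a finite-dimensional Hilbert space and let E be a quantum operation (CPTP map) on B(H). Then the following three conditions are equivalent: (1) for all σ^A ∈ B(H^A) and all σ^B ∈ B(H^B) there exists τ^A ∈ B(H^A) such that E(σ^A ⊗ σ^B) = τ^A ⊗ σ^B; (2) for all σ^B ∈ B(H^B) there exists τ^A ∈ B(H^A) such that E(1^A ⊗ σ^B) = τ^A ⊗ σ^B; (3) for all σ in the semigroup 𝔄, (Tr_A ∘ 𝒫_𝔄 ∘ E)(σ) = Tr_A(σ). -/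
open scoped Kronecker Matrix

noncomputable section

abbrev HIdx (m n p : ℕ) : Type := (Fin m × Fin n) ⊕ Fin p

def embed {m n p : ℕ} (M : Matrix (Fin m × Fin n) (Fin m × Fin n) ℂ) :
    Matrix (HIdx m n p) (HIdx m n p) ℂ :=
  Matrix.fromBlocks M 0 0 0

def PA (m n p : ℕ) : Matrix (HIdx m n p) (HIdx m n p) ℂ :=
  embed 1

def Pmu {m : ℕ} (n p : ℕ) (k l : Fin m) : Matrix (HIdx m n p) (HIdx m n p) ℂ :=
  embed (Matrix.single k l (1 : ℂ) ⊗ₖ (1 : Matrix (Fin n) (Fin n) ℂ))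

def trA {m n p : ℕ} (M : Matrix (HIdx m n p) (HIdx m n p) ℂ) :
    Matrix (Fin n) (Fin n) ℂ :=
  Matrix.of fun i j => ∑ k : Fin m, M (Sum.inl (k, i)) (Sum.inl (k, j))

def IsQuantumOperation {d : Type} [Fintype d] [DecidableEq d]
    (E : Matrix d d ℂ →ₗ[ℂ] Matrix d d ℂ) : Prop :=
  ∃ (ι : Type) (_ : Fintype ι) (K : ι → Matrix d d ℂ),
    (∀ ρ, E ρ = ∑ a, K a * ρ * (K a)ᴴ) ∧ ∑ a, (K a)ᴴ * K a = 1

/-!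
Each of (2) and (3) forces every Kraus operator `K a` to map `e_k ⊗ ψ` into `H^A ⊗ ℂψ`: the
rank-one operators `|K a (e_k ⊗ ψ)⟩⟨K a (e_k ⊗ ψ)|` add up to an operator whose partial trace is a
multiple of `|ψ⟩⟨ψ|` and which has no weight on `K` (for (3) by trace preservation), and a sum of
positive operators can only vanish on a vector if each summand does. Taking `ψ = e_i` and
`ψ = e_i + e_j` shows `K a P_𝔄 = F a ⊗ 1`, and then (1) and (3) are direct computations.
-/

namespace NoiselessSubsystem

open Matrix

lemma sum_kronecker {ι α β γ δ : Type} [Fintype ι] (A : ι → Matrix α β ℂ) (B : Matrix γ δ ℂ) :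
    (∑ a, A a) ⊗ₖ B = ∑ a, A a ⊗ₖ B := by
  ext
  simp [Matrix.sum_apply, Finset.sum_mul]

variable {m n p : ℕ}

section Embedding

@[simp]
lemma embed_inl_inl (M : Matrix (Fin m × Fin n) (Fin m × Fin n) ℂ) (x y : Fin m × Fin n) :
    embed (p := p) M (.inl x) (.inl y) = M x y := rfl

@[simp]
lemma embed_inl_inr (M : Matrix (Fin m × Fin n) (Fin m × Fin n) ℂ) (x : Fin m × Fin n)
    (q : Fin p) : embed M (.inl x) (.inr q) = 0 := rfl

@[simp]
lemma embed_inr (M : Matrix (Fin m × Fin n) (Fin m × Fin n) ℂ) (q : Fin p) (y : HIdx m n p) :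
    embed M (.inr q) y = 0 := by
  cases y <;> rfl

lemma embed_mul (M N : Matrix (Fin m × Fin n) (Fin m × Fin n) ℂ) :
    embed (p := p) M * embed N = embed (M * N) := by
  simp [embed, fromBlocks_multiply]

lemma embed_conjTranspose (M : Matrix (Fin m × Fin n) (Fin m × Fin n) ℂ) :
    (embed (p := p) M)ᴴ = embed Mᴴ := by
  simp [embed, fromBlocks_conjTranspose]

lemma embed_sum {ι : Type} [Fintype ι] (M : ι → Matrix (Fin m × Fin n) (Fin m × Fin n) ℂ) :
    embed (p := p) (∑ a, M a) = ∑ a, embed (M a) := by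
  ext (x | q) (y | q') <;> simp [Matrix.sum_apply]

lemma PA_mul_embed (M : Matrix (Fin m × Fin n) (Fin m × Fin n) ℂ) :
    PA m n p * embed M = embed M := by
  rw [PA, embed_mul, one_mul]

lemma embed_mul_PA (M : Matrix (Fin m × Fin n) (Fin m × Fin n) ℂ) :
    embed M * PA m n p = embed M := by
  rw [PA, embed_mul, mul_one]

lemma conjTranspose_PA : (PA m n p)ᴴ = PA m n p := by
  rw [PA, embed_conjTranspose, conjTranspose_one]

lemma mul_PA_of_toBlocks₂₁_eq_zero {K : Matrix (HIdx m n p) (HIdx m n p) ℂ}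
    (hK : K.toBlocks₂₁ = 0) : K * PA m n p = embed K.toBlocks₁₁ := by
  conv_lhs => rw [← fromBlocks_toBlocks K]
  simp [PA, embed, fromBlocks_multiply, hK]

lemma trace_embed (M : Matrix (Fin m × Fin n) (Fin m × Fin n) ℂ) :
    (embed (p := p) M).trace = M.trace := by
  simp [trace, Fintype.sum_sum_type]

lemma trA_embed_kronecker (A : Matrix (Fin m) (Fin m) ℂ) (B : Matrix (Fin n) (Fin n) ℂ) :
    trA (embed (p := p) (A ⊗ₖ B)) = A.trace • B := by
  ext i j
  simp [trA, trace, Finset.sum_mul]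

lemma trA_PA_mul_mul_PA (M : Matrix (HIdx m n p) (HIdx m n p) ℂ) :
    trA (PA m n p * M * PA m n p) = trA M := by
  ext i j
  simp [trA, PA, embed, mul_apply, Fintype.sum_sum_type, one_apply]

lemma trace_eq_trace_trA_add (M : Matrix (HIdx m n p) (HIdx m n p) ℂ) :
    M.trace = (trA M).trace + ∑ q, M (.inr q) (.inr q) := by
  simp [trace, trA, Fintype.sum_sum_type, Fintype.sum_prod_type, Finset.sum_comm (γ := Fin n)]

end Embedding

section Gram

open scoped ComplexOrder

variable {d κ : Type}

def outer (x : d → ℂ) : Matrix d d ℂ := vecMulVec x (star x)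

lemma outer_apply (x : d → ℂ) (i j : d) : outer x i j = x i * star (x j) := rfl

lemma mul_outer_mul_conjTranspose [Fintype d] (K : Matrix d d ℂ) (x : d → ℂ) :
    K * outer x * Kᴴ = outer (K *ᵥ x) := by
  rw [outer, outer, mul_vecMulVec, vecMulVec_mul, star_mulVec]

lemma star_dotProduct_outer_mulVec [Fintype d] (u x : d → ℂ) :
    star u ⬝ᵥ outer x *ᵥ u = star (star u ⬝ᵥ x) * (star u ⬝ᵥ x) := by
  rw [outer, vecMulVec_mulVec, dotProduct_smul, ← star_dotProduct, op_smul_eq_mul, mul_comm]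

variable [Fintype κ]

lemma eq_zero_of_sum_diag_sum_outer {β : Type} [Fintype β] {w : κ → d → ℂ} (g : β → d)
    (h : ∑ b, (∑ c, outer (w c)) (g b) (g b) = 0) (c : κ) (b : β) : w c (g b) = 0 := by
  have hz : star (fun x : β × κ => w x.2 (g x.1)) ⬝ᵥ (fun x => w x.2 (g x.1)) = 0 := by
    rw [← h, dotProduct, Fintype.sum_prod_type]
    simp [Matrix.sum_apply, outer_apply, mul_comm]
  exact congrFun (dotProduct_star_self_eq_zero.mp hz) (b, c)

lemma star_dotProduct_eq_zero_of_sum_outer [Fintype d] {w : κ → d → ℂ} {u : d → ℂ}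
    (h : star u ⬝ᵥ (∑ c, outer (w c)) *ᵥ u = 0) (c : κ) : star u ⬝ᵥ w c = 0 := by
  have hz : star (fun c => star u ⬝ᵥ w c) ⬝ᵥ (fun c => star u ⬝ᵥ w c) = 0 := by
    rw [← h, sum_mulVec, dotProduct_sum]
    simp only [star_dotProduct_outer_mulVec]
    rfl
  exact congrFun (dotProduct_star_self_eq_zero.mp hz) c

end Gram

section Kraus

variable {d ι : Type} [Fintype d] [Fintype ι]

def krausMap (K : ι → Matrix d d ℂ) (ρ : Matrix d d ℂ) : Matrix d d ℂ :=
  ∑ a, K a * ρ * (K a)ᴴ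

lemma trace_krausMap [DecidableEq d] {K : ι → Matrix d d ℂ} (hK : ∑ a, (K a)ᴴ * K a = 1)
    (ρ : Matrix d d ℂ) : (krausMap K ρ).trace = ρ.trace := by
  simp only [krausMap, trace_sum, trace_mul_cycle _ ρ]
  rw [← trace_sum, ← Finset.sum_mul, hK, one_mul]

lemma krausMap_outer (K : ι → Matrix d d ℂ) (x : d → ℂ) :
    krausMap K (outer x) = ∑ a, outer (K a *ᵥ x) := by
  simp only [krausMap, mul_outer_mul_conjTranspose]

lemma krausMap_sum_outer {κ : Type} [Fintype κ] (K : ι → Matrix d d ℂ) (x : κ → d → ℂ) :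
    krausMap K (∑ c, outer (x c)) = ∑ y : ι × κ, outer (K y.1 *ᵥ x y.2) := by
  simp [krausMap, Finset.mul_sum, Finset.sum_mul, mul_outer_mul_conjTranspose,
    Fintype.sum_prod_type]

end Kraus

section TensorLine

def prodVec (φ : Fin m → ℂ) (ψ : Fin n → ℂ) : HIdx m n p → ℂ :=
  Sum.elim (fun x => φ x.1 * ψ x.2) 0

lemma embed_outer_kronecker_outer (φ : Fin m → ℂ) (ψ : Fin n → ℂ) :
    embed (p := p) (outer φ ⊗ₖ outer ψ) = outer (prodVec φ ψ) := by
  ext (⟨k, i⟩ | q) (⟨l, j⟩ | q') <;> simp [outer_apply, prodVec]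
  ring

lemma embed_one_kronecker_outer (ψ : Fin n → ℂ) :
    embed (p := p) ((1 : Matrix (Fin m) (Fin m) ℂ) ⊗ₖ outer ψ) =
      ∑ k, outer (prodVec (Pi.single k 1) ψ) := by
  ext (⟨k, i⟩ | q) (⟨l, j⟩ | q') <;>
    simp [Matrix.sum_apply, outer_apply, prodVec, one_apply, Pi.single_apply]
  rcases eq_or_ne k l with rfl | hkl
  · simp
  · simp [hkl, hkl.symm]

lemma prodVec_single_single (k : Fin m) (i : Fin n) :
    prodVec (p := p) (Pi.single k 1) (Pi.single i 1) = Pi.single (.inl (k, i)) 1 := by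
  ext (⟨l, s⟩ | q)
  · by_cases l = k <;> by_cases s = i <;> simp [prodVec, *]
  · simp [prodVec]

lemma prodVec_add_right (φ : Fin m → ℂ) (ψ ψ' : Fin n → ℂ) :
    prodVec (p := p) φ (ψ + ψ') = prodVec φ ψ + prodVec φ ψ' := by
  ext (x | q) <;> simp [prodVec, mul_add]

/-- `w ∈ H^A ⊗ ℂψ`, phrased through the vectors orthogonal to `ψ`. -/
def MemTensorLine (ψ : Fin n → ℂ) (w : HIdx m n p → ℂ) : Prop :=
  (∀ q, w (.inr q) = 0) ∧
    ∀ u : Fin n → ℂ, star u ⬝ᵥ ψ = 0 → ∀ l, star u ⬝ᵥ (fun s => w (.inl (l, s))) = 0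

variable {κ : Type} [Fintype κ]

lemma trA_sum_outer (w : κ → HIdx m n p → ℂ) :
    trA (∑ c, outer (w c)) = ∑ x : κ × Fin m, outer (fun s => w x.1 (.inl (x.2, s))) := by
  ext i j
  simp [trA, Matrix.sum_apply, outer_apply, Fintype.sum_prod_type, Finset.sum_comm (γ := Fin m)]

lemma memTensorLine_of_sum_outer {w : κ → HIdx m n p → ℂ} {ψ : Fin n → ℂ} {μ : ℂ}
    (htrA : trA (∑ c, outer (w c)) = μ • outer ψ)
    (hK : ∑ q, (∑ c, outer (w c)) (.inr q) (.inr q) = 0) (c : κ) :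
    MemTensorLine ψ (w c) := by
  refine ⟨fun q => eq_zero_of_sum_diag_sum_outer Sum.inr hK c q, fun u hu l => ?_⟩
  have h : star u ⬝ᵥ trA (∑ c, outer (w c)) *ᵥ u = 0 := by
    rw [htrA, smul_mulVec, dotProduct_smul, star_dotProduct_outer_mulVec, hu, mul_zero,
      smul_zero]
  rw [trA_sum_outer] at h
  exact star_dotProduct_eq_zero_of_sum_outer h (c, l)

end TensorLine

section KroneckerOne

lemma exists_eq_kronecker_one {α β : Type} [DecidableEq β] (G : Matrix (α × β) (α × β) ℂ)
    (h_off : ∀ l k s i, s ≠ i → G (l, s) (k, i) = 0)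
    (h_diag : ∀ l k i j, G (l, i) (k, i) = G (l, j) (k, j)) :
    ∃ F : Matrix α α ℂ, G = F ⊗ₖ 1 := by
  rcases isEmpty_or_nonempty β with hβ | ⟨⟨i₀⟩⟩
  · exact ⟨0, Subsingleton.elim _ _⟩
  refine ⟨of fun l k => G (l, i₀) (k, i₀), ?_⟩
  ext ⟨l, s⟩ ⟨k, i⟩
  rcases eq_or_ne s i with rfl | hsi
  · simp [h_diag l k s i₀]
  · simp [hsi, h_off l k s i hsi]

lemma exists_mul_PA_eq_of_memTensorLine {K : Matrix (HIdx m n p) (HIdx m n p) ℂ}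
    (hK : ∀ k ψ, MemTensorLine ψ (K *ᵥ prodVec (Pi.single k 1) ψ)) :
    ∃ F : Matrix (Fin m) (Fin m) ℂ, K * PA m n p = embed (F ⊗ₖ 1) := by
  have hcol (k i) : K *ᵥ prodVec (Pi.single k 1) (Pi.single i 1) = fun r => K r (.inl (k, i)) := by
    rw [prodVec_single_single, mulVec_single_one]
    rfl
  have h_off (l k s i) (hsi : s ≠ i) : K (.inl (l, s)) (.inl (k, i)) = 0 := by
    simpa [hcol] using (hK k (Pi.single i 1)).2 (Pi.single s 1) (by simp [hsi]) l
  have h_diag (l k i j) : K (.inl (l, i)) (.inl (k, i)) = K (.inl (l, j)) (.inl (k, j)) := by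
    rcases eq_or_ne i j with rfl | hij
    · rfl
    have h := (hK k (Pi.single i 1 + Pi.single j 1)).2 (Pi.single i 1 - Pi.single j 1)
      (by simp [hij, hij.symm]) l
    simp [prodVec_add_right, mulVec_add, hcol, h_off l k i j hij, h_off l k j i hij.symm] at h
    linear_combination h
  have h21 : K.toBlocks₂₁ = 0 := by
    ext q ⟨k, i⟩
    simpa [hcol, toBlocks₂₁] using (hK k (Pi.single i 1)).1 q
  obtain ⟨F, hF⟩ := exists_eq_kronecker_one K.toBlocks₁₁ h_off h_diag
  exact ⟨F, by rw [mul_PA_of_toBlocks₂₁_eq_zero h21, hF]⟩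

end KroneckerOne

section KrausFamily

variable {ι : Type} [Fintype ι] {K : ι → Matrix (HIdx m n p) (HIdx m n p) ℂ}

def RestrictsToKroneckerOne (K : ι → Matrix (HIdx m n p) (HIdx m n p) ℂ) : Prop :=
  ∃ F : ι → Matrix (Fin m) (Fin m) ℂ, ∀ a, K a * PA m n p = embed (F a ⊗ₖ 1)

lemma mul_embed_mul_conjTranspose (L : Matrix (HIdx m n p) (HIdx m n p) ℂ)
    (M : Matrix (Fin m × Fin n) (Fin m × Fin n) ℂ) :
    L * embed M * Lᴴ = (L * PA m n p) * embed M * (L * PA m n p)ᴴ := by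
  rw [conjTranspose_mul, conjTranspose_PA, Matrix.mul_assoc L (PA m n p), PA_mul_embed,
    ← Matrix.mul_assoc (L * embed M), Matrix.mul_assoc L (embed M) (PA m n p), embed_mul_PA]

lemma krausMap_embed_kronecker {F : ι → Matrix (Fin m) (Fin m) ℂ}
    (hF : ∀ a, K a * PA m n p = embed (F a ⊗ₖ 1)) (σA : Matrix (Fin m) (Fin m) ℂ)
    (σB : Matrix (Fin n) (Fin n) ℂ) :
    krausMap K (embed (σA ⊗ₖ σB)) = embed (krausMap F σA ⊗ₖ σB) := by
  have h (a) : K a * embed (σA ⊗ₖ σB) * (K a)ᴴ = embed ((F a * σA * (F a)ᴴ) ⊗ₖ σB) := by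
    rw [mul_embed_mul_conjTranspose, hF, embed_conjTranspose, embed_mul, embed_mul,
      conjTranspose_kronecker, conjTranspose_one, ← mul_kronecker_mul, ← mul_kronecker_mul,
      one_mul, mul_one]
  simp only [krausMap, h, ← embed_sum, sum_kronecker]

lemma trA_krausMap_embed_kronecker (hTP : ∑ a, (K a)ᴴ * K a = 1)
    {F : ι → Matrix (Fin m) (Fin m) ℂ} (hF : ∀ a, K a * PA m n p = embed (F a ⊗ₖ 1))
    (σA : Matrix (Fin m) (Fin m) ℂ) (σB : Matrix (Fin n) (Fin n) ℂ) :
    trA (krausMap K (embed (σA ⊗ₖ σB))) = trA (embed (p := p) (σA ⊗ₖ σB)) := by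
  rcases eq_or_ne n 0 with rfl | hn
  · exact Subsingleton.elim _ _
  -- the trace of `K` on `σA ⊗ 1` computes that of `F` on `σA`, up to the factor `n ≠ 0`
  have htr : (krausMap F σA).trace = σA.trace := by
    have h := trace_krausMap hTP (embed (p := p) (σA ⊗ₖ (1 : Matrix (Fin n) (Fin n) ℂ)))
    rw [krausMap_embed_kronecker hF, trace_embed, trace_embed, trace_kronecker, trace_kronecker,
      trace_one] at h
    exact mul_right_cancel₀ (by simpa using hn) h
  rw [krausMap_embed_kronecker hF, trA_embed_kronecker, trA_embed_kronecker, htr]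

lemma restrictsToKroneckerOne_of_krausMap_one_kronecker
    (h : ∀ σB, ∃ τA, krausMap K (embed ((1 : Matrix (Fin m) (Fin m) ℂ) ⊗ₖ σB)) =
      embed (τA ⊗ₖ σB)) :
    RestrictsToKroneckerOne K := by
  refine Classical.skolem.mp fun a => exists_mul_PA_eq_of_memTensorLine fun k ψ => ?_
  obtain ⟨τ, hτ⟩ := h (outer ψ)
  rw [embed_one_kronecker_outer, krausMap_sum_outer] at hτ
  refine memTensorLine_of_sum_outer (w := fun x : ι × Fin m => K x.1 *ᵥ prodVec (Pi.single x.2 1) ψ)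
    (μ := τ.trace) ?_ ?_ (a, k)
  · rw [hτ, trA_embed_kronecker]
  · simp [hτ]

lemma restrictsToKroneckerOne_of_trA_krausMap (hTP : ∑ a, (K a)ᴴ * K a = 1)
    (h : ∀ σA σB, trA (krausMap K (embed (σA ⊗ₖ σB))) = trA (embed (p := p) (σA ⊗ₖ σB))) :
    RestrictsToKroneckerOne K := by
  refine Classical.skolem.mp fun a => exists_mul_PA_eq_of_memTensorLine fun k ψ => ?_
  have hρ := h (outer (Pi.single k 1)) (outer ψ)
  have htrace := trace_krausMap hTP (embed (p := p) (outer (Pi.single k 1) ⊗ₖ outer ψ))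
  rw [trace_eq_trace_trA_add, trace_eq_trace_trA_add, hρ] at htrace
  rw [embed_outer_kronecker_outer, krausMap_outer] at hρ htrace
  refine memTensorLine_of_sum_outer (w := fun a => K a *ᵥ prodVec (Pi.single k 1) ψ)
    (μ := (outer (Pi.single k 1)).trace) ?_ ?_ a
  · rw [hρ, ← embed_outer_kronecker_outer, trA_embed_kronecker]
  · simpa [← embed_outer_kronecker_outer] using htrace

end KrausFamily

end NoiselessSubsystem

open NoiselessSubsystem

/-- Lemma 1 (noiseless subsystems): for a CPTP map `E` on `B(H)`,
`H = (H^A ⊗ H^B) ⊕ K`, conditions (1), (2), (3) are equivalent. -/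
theorem noiseless_subsystem_tfae {m n p : ℕ}
    (E : Matrix (HIdx m n p) (HIdx m n p) ℂ →ₗ[ℂ] Matrix (HIdx m n p) (HIdx m n p) ℂ)
    (hE : IsQuantumOperation E) :
    ((∀ σA : Matrix (Fin m) (Fin m) ℂ, ∀ σB : Matrix (Fin n) (Fin n) ℂ,
        ∃ τA : Matrix (Fin m) (Fin m) ℂ,
          E (embed (σA ⊗ₖ σB)) = embed (τA ⊗ₖ σB)) ↔
      (∀ σB : Matrix (Fin n) (Fin n) ℂ, ∃ τA : Matrix (Fin m) (Fin m) ℂ,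
          E (embed ((1 : Matrix (Fin m) (Fin m) ℂ) ⊗ₖ σB)) = embed (τA ⊗ₖ σB)))
    ∧
    ((∀ σB : Matrix (Fin n) (Fin n) ℂ, ∃ τA : Matrix (Fin m) (Fin m) ℂ,
          E (embed ((1 : Matrix (Fin m) (Fin m) ℂ) ⊗ₖ σB)) = embed (τA ⊗ₖ σB)) ↔
      (∀ σ : Matrix (HIdx m n p) (HIdx m n p) ℂ,
        (∃ (σA : Matrix (Fin m) (Fin m) ℂ) (σB : Matrix (Fin n) (Fin n) ℂ),
            σ = embed (σA ⊗ₖ σB)) →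
        trA (PA m n p * E σ * PA m n p) = trA σ)) := by
  obtain ⟨ι, _, K, hKE, hTP⟩ := hE
  have hE : ⇑E = krausMap K := funext hKE
  simp only [hE, trA_PA_mul_mul_PA]
  have h1_of : RestrictsToKroneckerOne K →
      ∀ σA σB, ∃ τA, krausMap K (embed (σA ⊗ₖ σB)) = embed (τA ⊗ₖ σB) :=
    fun ⟨_, hF⟩ σA σB => ⟨_, krausMap_embed_kronecker hF σA σB⟩
  have h3_of : RestrictsToKroneckerOne K →
      ∀ σ, (∃ σA σB, σ = embed (σA ⊗ₖ σB)) → trA (krausMap K σ) = trA σ :=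
    fun ⟨_, hF⟩ _ ⟨σA, σB, hσ⟩ => hσ ▸ trA_krausMap_embed_kronecker hTP hF σA σB
  exact ⟨⟨fun h σB => h 1 σB,
      fun h => h1_of (restrictsToKroneckerOne_of_krausMap_one_kronecker h)⟩,
    ⟨fun h => h3_of (restrictsToKroneckerOne_of_krausMap_one_kronecker h),
      fun h => h1_of (restrictsToKroneckerOne_of_trA_krausMap hTP
        fun σA σB => h _ ⟨σA, σB, rfl⟩) 1⟩⟩
end
end

section
/- Let H = (H^A ⊗ H^B) ⊕ K be a fixed decomposition of a finite-dimensional Hilbert space and let E = {E_a} be a quantum operation on B(H) with Kraus operators E_a. Then the following are equivalent: (1) the H^B sector of 𝔄 encodes a noiseless subsystem for E, i.e. for all σ^B ∈ B(H^B) there exists τ^A ∈ B(H^A) with E(1^A ⊗ σ^B) = τ^A ⊗ σ^B; (2) the subspace P_𝔄 H = H^A ⊗ H^B is invariant for each operator E_a and the restriction of each E_a to H^A ⊗ H^B belongs to the algebra B(H^A) ⊗ 1^B; (3) there exist scalars λ_{akl} such that P_k E_a P_l = λ_{akl} P_{kl} for all a, k, l, and E_a P_𝔄 = P_𝔄 E_a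 P_𝔄 for all a. -/
/-!
The key fact: if the completely positive map `ρ ↦ ∑ E_a ρ E_a†` sends a projection `R` into
`R B(H) R`, then `E_a R = R E_a R` for every `a`, because
`∑ ((1 - R) E_a R) ((1 - R) E_a R)† = (1 - R) E(R) (1 - R) = 0`.
For `R = P_𝔄` this is the invariance of `H^A ⊗ H^B`. For `R = 1 ⊗ σ` with `σ` the rank-one
projection onto a vector `v` of `H^B`, it says that `v` is an eigenvector of every `n × n` block
of `E_a` on `H^A ⊗ H^B`; so the blocks are scalars, i.e. `P_𝔄 E_a P_𝔄 = F_a ⊗ 1`.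
Conversely `E_a P_𝔄 = F_a ⊗ 1` gives `E(1 ⊗ σ) = (∑ F_a F_a†) ⊗ σ`, and condition (3) only
reads off the blocks `P_k E_a P_l = (F_a)_{kl} P_{kl}`.
-/

open scoped Kronecker Matrix

noncomputable section

open scoped ComplexOrder

namespace Matrix

section Kraus

variable {𝕜 d ι : Type*} [RCLike 𝕜] [Fintype d] [Fintype ι]

open scoped MatrixOrder in
theorem eq_zero_of_sum_mul_conjTranspose_eq_zero {S : ι → Matrix d d 𝕜}
    (h : ∑ a, S a * (S a)ᴴ = 0) (a : ι) : S a = 0 :=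
  self_mul_conjTranspose_eq_zero.1 <|
    (Finset.sum_eq_zero_iff_of_nonneg fun b _ => (posSemidef_self_mul_conjTranspose (S b)).nonneg).1
      h a (Finset.mem_univ a)

theorem mul_eq_mul_mul_of_one_sub_mul_sum_eq_zero [DecidableEq d] {E : ι → Matrix d d 𝕜}
    {R : Matrix d d 𝕜} (hR : IsStarProjection R)
    (h : (1 - R) * ∑ a, E a * R * (E a)ᴴ = 0) (a : ι) : E a * R = R * E a * R := by
  have hRH : Rᴴ = R := hR.isSelfAdjoint
  have hNH : (1 - R)ᴴ = 1 - R := hR.one_sub.isSelfAdjoint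
  have hzero : ∑ b, ((1 - R) * E b * R) * ((1 - R) * E b * R)ᴴ = 0 := by
    calc ∑ b, ((1 - R) * E b * R) * ((1 - R) * E b * R)ᴴ
        = ∑ b, (1 - R) * (E b * (R * R) * (E b)ᴴ) * (1 - R) := by
          simp only [conjTranspose_mul, hRH, hNH, Matrix.mul_assoc]
      _ = (1 - R) * (∑ b, E b * R * (E b)ᴴ) * (1 - R) := by
          rw [hR.isIdempotentElem.eq, Matrix.mul_sum, Finset.sum_mul]
      _ = 0 := by rw [h, Matrix.zero_mul]
  have := eq_zero_of_sum_mul_conjTranspose_eq_zero hzero a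
  rwa [Matrix.sub_mul, Matrix.one_mul, Matrix.sub_mul, sub_eq_zero] at this

end Kraus

section RankOne

variable {𝕜 d : Type*} [RCLike 𝕜] [Fintype d]

/-- The orthogonal projection onto the line through `v`; it is `0` when `v = 0`. -/
def rankOneProj (v : d → 𝕜) : Matrix d d 𝕜 := (star v ⬝ᵥ v)⁻¹ • vecMulVec v (star v)

theorem rankOneProj_mulVec (v w : d → 𝕜) :
    rankOneProj v *ᵥ w = ((star v ⬝ᵥ v)⁻¹ * (star v ⬝ᵥ w)) • v := by
  rw [rankOneProj, smul_mulVec, vecMulVec_mulVec, op_smul_eq_smul, smul_smul]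

theorem rankOneProj_mulVec_self {v : d → 𝕜} (hv : v ≠ 0) : rankOneProj v *ᵥ v = v := by
  rw [rankOneProj_mulVec, inv_mul_cancel₀ (dotProduct_star_self_eq_zero.not.2 hv), one_smul]

theorem isStarProjection_rankOneProj {v : d → 𝕜} (hv : v ≠ 0) :
    IsStarProjection (rankOneProj v) := by
  have hr : star v ⬝ᵥ v ≠ 0 := dotProduct_star_self_eq_zero.not.2 hv
  have hr' : star (star v ⬝ᵥ v) = star v ⬝ᵥ v := by rw [← star_dotProduct_star, star_star]
  constructor
  · rw [IsIdempotentElem, rankOneProj, smul_mul_smul, vecMulVec_mul_vecMulVec, vecMulVec_smul,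
      smul_smul, mul_assoc, inv_mul_cancel₀ hr, mul_one]
  · rw [IsSelfAdjoint, rankOneProj, star_smul, star_eq_conjTranspose, conjTranspose_vecMulVec,
      star_star, star_inv₀, hr']

/-- Testing against rank-one projections shows that every vector is an eigenvector of `A`. -/
theorem exists_eq_smul_one_of_forall_mul_eq_mul_mul [DecidableEq d] {A : Matrix d d 𝕜}
    (h : ∀ σ : Matrix d d 𝕜, IsStarProjection σ → A * σ = σ * A * σ) : ∃ c : 𝕜, A = c • 1 := by
  have hcol (v : d → 𝕜) : ¬LinearIndependent 𝕜 ![v, toLin' A v] := by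
    rcases eq_or_ne v 0 with rfl | hv
    · exact fun hli => hli.ne_zero 0 rfl
    have hAv : A *ᵥ v = rankOneProj v *ᵥ (A *ᵥ v) := by
      conv_lhs => rw [← rankOneProj_mulVec_self hv, mulVec_mulVec,
        h _ (isStarProjection_rankOneProj hv), ← mulVec_mulVec, ← mulVec_mulVec,
        rankOneProj_mulVec_self hv]
    obtain ⟨c, hc⟩ : ∃ c : 𝕜, A *ᵥ v = c • v := ⟨_, hAv.trans (rankOneProj_mulVec _ _)⟩
    rw [toLin'_apply, LinearIndependent.pair_iff]
    intro hli
    exact one_ne_zero (neg_eq_zero.1 (hli c (-1) (by rw [hc, neg_one_smul, add_neg_cancel])).2)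
  obtain ⟨c, hc⟩ := LinearMap.exists_eq_smul_id_of_forall_notLinearIndependent hcol
  exact ⟨c, toLin'.injective (by rw [hc, map_smul, toLin'_one]; rfl)⟩

end RankOne

theorem sum_kronecker {R l m n q ι : Type*} [CommSemiring R] (s : Finset ι)
    (A : ι → Matrix l m R) (B : Matrix n q R) : (∑ i ∈ s, A i) ⊗ₖ B = ∑ i ∈ s, A i ⊗ₖ B := by
  ext
  simp [sum_apply, Finset.sum_mul]

section Blocks

variable {α β R : Type*} [Fintype α] [Fintype β] [DecidableEq α] [CommRing R]

theorem compRingEquiv_symm_one_kronecker (σ : Matrix β β R) :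
    (compRingEquiv α β R).symm (1 ⊗ₖ σ) = diagonal fun _ => σ := by
  ext k l i j
  by_cases hkl : k = l <;> simp [hkl]

variable [DecidableEq β]

omit [DecidableEq α] in
theorem compRingEquiv_symm_kronecker_one (F : Matrix α α R) :
    (compRingEquiv α β R).symm (F ⊗ₖ 1) = of fun k l => F k l • 1 := by
  ext k l i j
  simp [one_apply]

omit [DecidableEq α] in
theorem exists_eq_kronecker_one_iff {M : Matrix (α × β) (α × β) R} :
    (∃ F : Matrix α α R, M = F ⊗ₖ 1) ↔
      ∀ k l, ∃ c : R, (compRingEquiv α β R).symm M k l = c • 1 := by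
  constructor
  · rintro ⟨F, rfl⟩ k l
    exact ⟨F k l, by rw [compRingEquiv_symm_kronecker_one, of_apply]⟩
  · intro h
    choose c hc using h
    refine ⟨of c, (compRingEquiv α β R).symm.injective ?_⟩
    rw [compRingEquiv_symm_kronecker_one]
    exact funext₂ hc

theorem compRingEquiv_symm_single_kronecker_one (k l : α) (c : R) :
    (compRingEquiv α β R).symm (single k l c ⊗ₖ 1) = single k l (c • 1) := by
  rw [compRingEquiv_symm_kronecker_one]
  ext a b : 2
  by_cases h : k = a ∧ l = b
  · simp [h.1, h.2]
  · simp [single_apply, h]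

theorem single_kronecker_one_mul_mul_single_kronecker_one (M : Matrix (α × β) (α × β) R)
    (k l : α) : (single k k 1 ⊗ₖ 1) * M * (single l l 1 ⊗ₖ 1) =
      compRingEquiv α β R (single k l ((compRingEquiv α β R).symm M k l)) := by
  apply (compRingEquiv α β R).symm.injective
  simp only [map_mul, RingEquiv.symm_apply_apply, compRingEquiv_symm_single_kronecker_one,
    one_smul, single_mul_mul_single, one_mul, mul_one]

theorem exists_eq_kronecker_one_iff_corners {M : Matrix (α × β) (α × β) R} :
    (∃ F : Matrix α α R, M = F ⊗ₖ 1) ↔ ∃ lam : α → α → R,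
      ∀ k l, (single k k 1 ⊗ₖ 1) * M * (single l l 1 ⊗ₖ 1) = lam k l • (single k l 1 ⊗ₖ 1) := by
  have corner (k l : α) (c : R) :
      (single k k 1 ⊗ₖ 1) * M * (single l l 1 ⊗ₖ 1) = c • (single k l 1 ⊗ₖ 1) ↔
        (compRingEquiv α β R).symm M k l = c • 1 := by
    rw [single_kronecker_one_mul_mul_single_kronecker_one, ← smul_kronecker, smul_single,
      smul_eq_mul, mul_one, ← (compRingEquiv α β R).symm.injective.eq_iff,
      RingEquiv.symm_apply_apply, compRingEquiv_symm_single_kronecker_one]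
    exact ⟨fun h => by simpa using congr_fun₂ h k l, congrArg _⟩
  simp only [exists_eq_kronecker_one_iff, corner]
  exact ⟨fun h => ⟨fun k l => (h k l).choose, fun k l => (h k l).choose_spec⟩,
    fun ⟨lam, h⟩ k l => ⟨lam k l, h k l⟩⟩

end Blocks

theorem exists_eq_kronecker_one_of_forall_mul_eq_mul_mul {𝕜 α β : Type*} [RCLike 𝕜]
    [Fintype α] [Fintype β] [DecidableEq α] [DecidableEq β] {M : Matrix (α × β) (α × β) 𝕜}
    (h : ∀ σ : Matrix β β 𝕜, IsStarProjection σ →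
      M * (1 ⊗ₖ σ) = (1 ⊗ₖ σ) * M * (1 ⊗ₖ σ)) :
    ∃ F : Matrix α α 𝕜, M = F ⊗ₖ 1 := by
  refine exists_eq_kronecker_one_iff.2 fun k l =>
    exists_eq_smul_one_of_forall_mul_eq_mul_mul fun σ hσ => ?_
  have := congr_fun₂ (congrArg (compRingEquiv α β 𝕜).symm (h σ hσ)) k l
  simpa only [map_mul, compRingEquiv_symm_one_kronecker, mul_diagonal, diagonal_mul] using this

end Matrix

open Matrix

section Corner

variable {m n p : ℕ}

def embedStarHom (m n p : ℕ) :
    Matrix (Fin m × Fin n) (Fin m × Fin n) ℂ →⋆ₙₐ[ℂ] Matrix (HIdx m n p) (HIdx m n p) ℂ where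
  toFun := embed
  map_smul' c M := by simp [embed, fromBlocks_smul]
  map_zero' := fromBlocks_zero
  map_add' M N := by simp [embed, fromBlocks_add]
  map_mul' M N := by simp [embed, fromBlocks_multiply]
  map_star' M := by simp [embed, star_eq_conjTranspose, fromBlocks_conjTranspose]

@[simp]
theorem embedStarHom_apply (M : Matrix (Fin m × Fin n) (Fin m × Fin n) ℂ) :
    embedStarHom m n p M = embed M := rfl

theorem embed_injective : Function.Injective (embed (m := m) (n := n) (p := p)) :=
  fun _ _ h => (fromBlocks_inj.1 h).1

theorem embed_mul (M N : Matrix (Fin m × Fin n) (Fin m × Fin n) ℂ) :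
    embed (p := p) M * embed N = embed (M * N) :=
  (map_mul (embedStarHom m n p) M N).symm

theorem embed_conjTranspose (M : Matrix (Fin m × Fin n) (Fin m × Fin n) ℂ) :
    (embed (p := p) M)ᴴ = embed Mᴴ :=
  (map_star (embedStarHom m n p) M).symm

theorem smul_embed (c : ℂ) (M : Matrix (Fin m × Fin n) (Fin m × Fin n) ℂ) :
    c • embed (p := p) M = embed (c • M) :=
  (map_smul (embedStarHom m n p) c M).symm

theorem embed_mul_mul_embed (M N : Matrix (Fin m × Fin n) (Fin m × Fin n) ℂ)
    (X : Matrix (HIdx m n p) (HIdx m n p) ℂ) :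
    embed M * X * embed N = embed (M * X.toBlocks₁₁ * N) := by
  rw [← fromBlocks_toBlocks X]
  simp [embed, fromBlocks_multiply]

theorem PA_mul_mul_PA (X : Matrix (HIdx m n p) (HIdx m n p) ℂ) :
    PA m n p * X * PA m n p = embed X.toBlocks₁₁ := by
  rw [PA, embed_mul_mul_embed, Matrix.one_mul, Matrix.mul_one]

theorem conjTranspose_PA : (PA m n p)ᴴ = PA m n p := by
  rw [PA, embed_conjTranspose, conjTranspose_one]

theorem isStarProjection_embed_one_kronecker {σ : Matrix (Fin n) (Fin n) ℂ}
    (hσ : IsStarProjection σ) :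
    IsStarProjection (embed (p := p) ((1 : Matrix (Fin m) (Fin m) ℂ) ⊗ₖ σ)) := by
  have hσH : σᴴ = σ := hσ.isSelfAdjoint
  have : IsStarProjection ((1 : Matrix (Fin m) (Fin m) ℂ) ⊗ₖ σ) :=
    ⟨by rw [IsIdempotentElem, ← mul_kronecker_mul, one_mul, hσ.isIdempotentElem.eq],
      by rw [IsSelfAdjoint, star_eq_conjTranspose, conjTranspose_kronecker, conjTranspose_one,
        hσH]⟩
  exact this.map (embedStarHom m n p)

theorem toBlocks₁₁_mul_eq_of_mul_embed_eq {X : Matrix (HIdx m n p) (HIdx m n p) ℂ}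
    {R : Matrix (Fin m × Fin n) (Fin m × Fin n) ℂ}
    (h : X * embed R = embed R * X * embed R) :
    X.toBlocks₁₁ * R = R * X.toBlocks₁₁ * R := by
  apply embed_injective (p := p)
  calc embed (X.toBlocks₁₁ * R) = PA m n p * X * embed R := by
        rw [PA, embed_mul_mul_embed, one_mul]
    _ = PA m n p * embed R * X * embed R := by
        rw [Matrix.mul_assoc (PA m n p) X, h, ← Matrix.mul_assoc, ← Matrix.mul_assoc]
    _ = embed (R * X.toBlocks₁₁ * R) := by
        rw [PA, embed_mul, one_mul, embed_mul_mul_embed]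

theorem exists_PA_mul_mul_PA_eq_iff (X : Matrix (HIdx m n p) (HIdx m n p) ℂ) :
    (∃ F : Matrix (Fin m) (Fin m) ℂ, PA m n p * X * PA m n p = embed (F ⊗ₖ 1)) ↔
      ∃ lam : Fin m → Fin m → ℂ,
        ∀ k l, Pmu n p k k * X * Pmu n p l l = lam k l • Pmu n p k l := by
  simp only [PA_mul_mul_PA, Pmu, embed_mul_mul_embed, smul_embed, embed_injective.eq_iff]
  exact exists_eq_kronecker_one_iff_corners

end Corner

section NoiselessSubsystem

variable {m n p : ℕ}

/-- Condition (1) of the theorem, for a map `Φ` on `B(H)`. -/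
def IsNoiselessSubsystem
    (Φ : Matrix (HIdx m n p) (HIdx m n p) ℂ → Matrix (HIdx m n p) (HIdx m n p) ℂ) : Prop :=
  ∀ σB : Matrix (Fin n) (Fin n) ℂ, ∃ τA : Matrix (Fin m) (Fin m) ℂ,
    Φ (embed ((1 : Matrix (Fin m) (Fin m) ℂ) ⊗ₖ σB)) = embed (τA ⊗ₖ σB)

variable {ι : Type*} [Fintype ι] {E : ι → Matrix (HIdx m n p) (HIdx m n p) ℂ}

namespace IsNoiselessSubsystem

variable (h : IsNoiselessSubsystem fun ρ => ∑ a, E a * ρ * (E a)ᴴ)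
include h

theorem mul_embed_one_kronecker {σ : Matrix (Fin n) (Fin n) ℂ} (hσ : IsStarProjection σ)
    (a : ι) :
    E a * embed (1 ⊗ₖ σ) = embed ((1 : Matrix (Fin m) (Fin m) ℂ) ⊗ₖ σ) * E a * embed (1 ⊗ₖ σ) := by
  obtain ⟨τ, hτ⟩ := h σ
  simp only at hτ
  refine mul_eq_mul_mul_of_one_sub_mul_sum_eq_zero (isStarProjection_embed_one_kronecker hσ) ?_ a
  rw [hτ, Matrix.sub_mul, Matrix.one_mul, embed_mul, ← mul_kronecker_mul, one_mul,
    hσ.isIdempotentElem.eq, sub_self]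

theorem mul_PA (a : ι) : E a * PA m n p = PA m n p * E a * PA m n p := by
  have := h.mul_embed_one_kronecker (IsStarProjection.one (Matrix (Fin n) (Fin n) ℂ)) a
  rwa [one_kronecker_one, ← PA] at this

theorem exists_PA_mul_mul_PA_eq (a : ι) :
    ∃ F : Matrix (Fin m) (Fin m) ℂ, PA m n p * E a * PA m n p = embed (F ⊗ₖ 1) := by
  obtain ⟨F, hF⟩ := exists_eq_kronecker_one_of_forall_mul_eq_mul_mul fun σ hσ =>
    toBlocks₁₁_mul_eq_of_mul_embed_eq (h.mul_embed_one_kronecker hσ a)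
  exact ⟨F, by rw [PA_mul_mul_PA, hF]⟩

end IsNoiselessSubsystem

theorem isNoiselessSubsystem_of_mul_PA_eq {F : ι → Matrix (Fin m) (Fin m) ℂ}
    (hF : ∀ a, E a * PA m n p = embed (F a ⊗ₖ 1)) :
    IsNoiselessSubsystem fun ρ => ∑ a, E a * ρ * (E a)ᴴ := by
  intro σ
  refine ⟨∑ a, F a * (F a)ᴴ, ?_⟩
  have hcorner : PA m n p * embed (1 ⊗ₖ σ) * PA m n p = embed (1 ⊗ₖ σ) := by
    rw [PA, embed_mul, embed_mul, one_mul, mul_one]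
  have hterm (a : ι) : E a * embed (1 ⊗ₖ σ) * (E a)ᴴ = embed ((F a * (F a)ᴴ) ⊗ₖ σ) := by
    calc E a * embed (1 ⊗ₖ σ) * (E a)ᴴ
        = (E a * PA m n p) * embed (1 ⊗ₖ σ) * (E a * PA m n p)ᴴ := by
          rw [conjTranspose_mul, conjTranspose_PA]
          conv_lhs => rw [← hcorner]
          simp only [Matrix.mul_assoc]
      _ = embed ((F a * 1 * (F a)ᴴ) ⊗ₖ (1 * σ * 1)) := by
          rw [hF, embed_conjTranspose, conjTranspose_kronecker, conjTranspose_one, embed_mul,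
            embed_mul, mul_kronecker_mul, mul_kronecker_mul]
      _ = embed ((F a * (F a)ᴴ) ⊗ₖ σ) := by rw [mul_one, one_mul, mul_one]
  simp only [hterm]
  simp only [sum_kronecker, ← embedStarHom_apply, map_sum]

theorem isNoiselessSubsystem_iff :
    (IsNoiselessSubsystem fun ρ => ∑ a, E a * ρ * (E a)ᴴ) ↔
      ∀ a, E a * PA m n p = PA m n p * E a * PA m n p ∧
        ∃ F : Matrix (Fin m) (Fin m) ℂ, PA m n p * E a * PA m n p = embed (F ⊗ₖ 1) := by
  refine ⟨fun h a => ⟨h.mul_PA a, h.exists_PA_mul_mul_PA_eq a⟩, fun h => ?_⟩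
  choose hinv F hF using h
  exact isNoiselessSubsystem_of_mul_PA_eq fun a => (hinv a).trans (hF a)

end NoiselessSubsystem

theorem noiseless_subsystem_conditions_general {m n p : ℕ} {ι : Type} [Fintype ι]
    (Eop : Matrix (HIdx m n p) (HIdx m n p) ℂ →ₗ[ℂ] Matrix (HIdx m n p) (HIdx m n p) ℂ)
    (E : ι → Matrix (HIdx m n p) (HIdx m n p) ℂ)
    (hKraus : ∀ ρ, Eop ρ = ∑ a, E a * ρ * (E a)ᴴ) :
    -- (1) ↔ (2)
    ((∀ σB : Matrix (Fin n) (Fin n) ℂ, ∃ τA : Matrix (Fin m) (Fin m) ℂ,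
        Eop (embed ((1 : Matrix (Fin m) (Fin m) ℂ) ⊗ₖ σB)) = embed (τA ⊗ₖ σB)) ↔
      (∀ a, E a * PA m n p = PA m n p * E a * PA m n p ∧
        ∃ F : Matrix (Fin m) (Fin m) ℂ,
          PA m n p * E a * PA m n p = embed (F ⊗ₖ (1 : Matrix (Fin n) (Fin n) ℂ))))
    ∧
    -- (2) ↔ (3)
    ((∀ a, E a * PA m n p = PA m n p * E a * PA m n p ∧
        ∃ F : Matrix (Fin m) (Fin m) ℂ,
          PA m n p * E a * PA m n p = embed (F ⊗ₖ (1 : Matrix (Fin n) (Fin n) ℂ))) ↔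
      ((∃ lam : ι → Fin m → Fin m → ℂ,
          ∀ a k l, Pmu n p k k * E a * Pmu n p l l = lam a k l • Pmu n p k l) ∧
        (∀ a, E a * PA m n p = PA m n p * E a * PA m n p))) := by
  have hEop : ⇑Eop = fun ρ => ∑ a, E a * ρ * (E a)ᴴ := funext hKraus
  refine ⟨?_, ?_⟩
  · have := isNoiselessSubsystem_iff (E := E)
    rwa [← hEop] at this
  · rw [forall_and, and_comm]
    simp only [exists_PA_mul_mul_PA_eq_iff, Classical.skolem]

/-- Theorem (testable conditions for a noiseless subsystem): for a quantum operation
`E = {E_a}` on `B(H)`, `H = (H^A ⊗ H^B) ⊕ K`, conditions (1), (2), (3) are equivalent. -/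
theorem noiseless_subsystem_conditions {m n p : ℕ} {ι : Type} [Fintype ι]
    (Eop : Matrix (HIdx m n p) (HIdx m n p) ℂ →ₗ[ℂ] Matrix (HIdx m n p) (HIdx m n p) ℂ)
    (E : ι → Matrix (HIdx m n p) (HIdx m n p) ℂ)
    (hKraus : ∀ ρ, Eop ρ = ∑ a, E a * ρ * (E a)ᴴ)
    (hTP : ∑ a, (E a)ᴴ * E a = 1) :
    -- (1) ↔ (2)
    ((∀ σB : Matrix (Fin n) (Fin n) ℂ, ∃ τA : Matrix (Fin m) (Fin m) ℂ,
        Eop (embed ((1 : Matrix (Fin m) (Fin m) ℂ) ⊗ₖ σB)) = embed (τA ⊗ₖ σB)) ↔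
      (∀ a, E a * PA m n p = PA m n p * E a * PA m n p ∧
        ∃ F : Matrix (Fin m) (Fin m) ℂ,
          PA m n p * E a * PA m n p = embed (F ⊗ₖ (1 : Matrix (Fin n) (Fin n) ℂ))))
    ∧
    -- (2) ↔ (3)
    ((∀ a, E a * PA m n p = PA m n p * E a * PA m n p ∧
        ∃ F : Matrix (Fin m) (Fin m) ℂ,
          PA m n p * E a * PA m n p = embed (F ⊗ₖ (1 : Matrix (Fin n) (Fin n) ℂ))) ↔
      ((∃ lam : ι → Fin m → Fin m → ℂ,
          ∀ a k l, Pmu n p k k * E a * Pmu n p l l = lam a k l • Pmu n p k l) ∧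
        (∀ a, E a * PA m n p = PA m n p * E a * PA m n p))) :=
  noiseless_subsystem_conditions_general Eop E hKraus
end
end

section
/- Let H = (H^A ⊗ H^B) ⊕ K be a fixed decomposition of a finite-dimensional Hilbert space and let E be a quantum operation on B(H). Then there exists a quantum operation R on B(H) such that (Tr_A ∘ 𝒫_𝔄 ∘ R ∘ E)(σ) = Tr_A(σ) for all σ ∈ 𝔄 (i.e. the H^B sector of 𝔄 is correctable for E) if and only if there exists a quantum operation R' on B(H) such that (R' ∘ E)(σ) = σ for every σ in the C*-algebra 1^A ⊗ B(H^B) ⊆ B(H). -/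
open scoped Kronecker Matrix

noncomputable section

/-!
(⇐) Let `N_c` be Kraus operators of `R' ∘ E`. Comparing the `K`-blocks of
`∑ N_c P_𝔄 N_cᴴ = P_𝔄` shows that the blocks `C_c` of `N_c` mapping `H^A ⊗ H^B` into `K` satisfy
`∑ C_c C_cᴴ = 0`, so they vanish. The compressions `A_c` of `N_c` to `H^A ⊗ H^B` then form a
unital, trace-preserving Kraus family fixing every `1 ⊗ τ`, which forces each `A_c` into the
commutant `B(H^A) ⊗ 1`. Hence `A_c = D_c ⊗ 1` with `∑ D_cᴴ D_c = 1`, and `Tr_A` of the image of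
`σA ⊗ σB` is `Tr σA • σB`.

(⇒) Follow `R` by the channel `ρ ↦ m⁻¹ (1 ⊗ Tr_A ρ) + Tr(ρ|_K) |x₀⟩⟨x₀|`. On
`ρ = R(E(1 ⊗ σB))` we have `Tr_A ρ = m σB` by hypothesis, and trace preservation then leaves
`Tr(ρ|_K) = 0`, so this channel returns `1 ⊗ σB`.
-/

open Matrix

namespace Matrix

section Kronecker

variable {R α β : Type*}

def traceLeft [Fintype α] [AddCommMonoid R] (M : Matrix (α × β) (α × β) R) : Matrix β β R :=
  of fun i j => ∑ k, M (k, i) (k, j)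

theorem traceLeft_kronecker [Fintype α] [Semiring R] (X : Matrix α α R) (Y : Matrix β β R) :
    traceLeft (X ⊗ₖ Y) = X.trace • Y := by
  ext i j
  simp [traceLeft, trace, Finset.sum_mul]

theorem trace_traceLeft [Fintype α] [Fintype β] [AddCommMonoid R]
    (M : Matrix (α × β) (α × β) R) : (traceLeft M).trace = M.trace := by
  simp only [trace, diag, traceLeft, of_apply, Fintype.sum_prod_type]
  exact Finset.sum_comm

theorem sum_kronecker_s2 [NonUnitalNonAssocSemiring R] {ι : Type*} [Fintype ι]
    (f : ι → Matrix α α R) (Y : Matrix β β R) : (∑ c, f c) ⊗ₖ Y = ∑ c, f c ⊗ₖ Y := by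
  ext ⟨k, i⟩ ⟨l, j⟩
  simp [sum_apply, Finset.sum_mul]

theorem kronecker_one_injective [DecidableEq β] [MulZeroOneClass R] [Nonempty β] :
    Function.Injective fun X : Matrix α α R => X ⊗ₖ (1 : Matrix β β R) := by
  intro X Y h
  obtain ⟨b⟩ := ‹Nonempty β›
  ext k l
  simpa using congr_fun₂ h (k, b) (l, b)

variable [Fintype α] [Fintype β] [DecidableEq α] [DecidableEq β] [Semiring R]

theorem mul_one_kronecker_single_apply (G : Matrix (α × β) (α × β) R)
    (u v : β) (k l : α) (i j : β) :
    (G * ((1 : Matrix α α R) ⊗ₖ single u v 1) : Matrix (α × β) (α × β) R) (k, i) (l, j)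
      = if j = v then G (k, i) (l, u) else 0 := by
  simp [mul_apply, Fintype.sum_prod_type, one_apply, single_apply, ite_and, eq_comm]

theorem one_kronecker_single_mul_apply (G : Matrix (α × β) (α × β) R)
    (u v : β) (k l : α) (i j : β) :
    (((1 : Matrix α α R) ⊗ₖ single u v 1) * G : Matrix (α × β) (α × β) R) (k, i) (l, j)
      = if i = u then G (k, v) (l, j) else 0 := by
  simp [mul_apply, Fintype.sum_prod_type, one_apply, single_apply, ite_and, eq_comm]

theorem exists_eq_kronecker_one_of_commute [Nonempty β] {G : Matrix (α × β) (α × β) R}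
    (hG : ∀ τ : Matrix β β R, Commute G (1 ⊗ₖ τ)) : ∃ C : Matrix α α R, G = C ⊗ₖ 1 := by
  obtain ⟨b⟩ := ‹Nonempty β›
  have hrel (u v : β) (k l : α) (i j : β) :
      (if j = v then G (k, i) (l, u) else 0) = if i = u then G (k, v) (l, j) else 0 := by
    rw [← mul_one_kronecker_single_apply, ← one_kronecker_single_mul_apply, (hG _).eq]
  refine ⟨of fun k l => G (k, b) (l, b), ?_⟩
  ext ⟨k, i⟩ ⟨l, j⟩
  rcases eq_or_ne i j with rfl | hij
  · simpa using hrel i b k l i b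
  · simpa [hij, Ne.symm hij] using (hrel i i k l i j).symm

theorem sum_single_kronecker_one_mul_mul (M : Matrix (α × β) (α × β) R) :
    ∑ a, ∑ b, (single a b 1 ⊗ₖ (1 : Matrix β β R)) * M * (single b a 1 ⊗ₖ 1)
      = 1 ⊗ₖ traceLeft M := by
  ext ⟨k, i⟩ ⟨l, j⟩
  simp [mul_apply, Fintype.sum_prod_type, one_apply, single_apply, sum_apply, ite_and, traceLeft,
    eq_comm]

end Kronecker

section Kraus

variable {𝕜 ι d : Type*} [RCLike 𝕜] [Fintype ι] [Fintype d]

open scoped MatrixOrder ComplexOrder in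
theorem sum_mul_conjTranspose_eq_zero_iff {e : Type*} [Fintype e] {F : ι → Matrix d e 𝕜} :
    ∑ c, F c * (F c)ᴴ = 0 ↔ ∀ c, F c = 0 := by
  rw [Finset.sum_eq_zero_iff_of_nonneg fun c _ => (posSemidef_self_mul_conjTranspose _).nonneg]
  simp only [Finset.mem_univ, true_implies, self_mul_conjTranspose_eq_zero]

def krausMap (K : ι → Matrix d d 𝕜) : Matrix d d 𝕜 →ₗ[𝕜] Matrix d d 𝕜 where
  toFun ρ := ∑ c, K c * ρ * (K c)ᴴ
  map_add' x y := by simp only [mul_add, add_mul, Finset.sum_add_distrib]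
  map_smul' a x := by
    simp only [Matrix.mul_smul, Matrix.smul_mul, Finset.smul_sum, RingHom.id_apply]

theorem krausMap_apply (K : ι → Matrix d d 𝕜) (ρ : Matrix d d 𝕜) :
    krausMap K ρ = ∑ c, K c * ρ * (K c)ᴴ := rfl

variable [DecidableEq d]

theorem trace_krausMap {K : ι → Matrix d d 𝕜} (htp : ∑ c, (K c)ᴴ * K c = 1)
    (ρ : Matrix d d 𝕜) : (krausMap K ρ).trace = ρ.trace := by
  rw [krausMap_apply, trace_sum]
  simp_rw [trace_mul_cycle (K _) ρ]
  rw [← trace_sum, ← Finset.sum_mul, htp, one_mul]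

/-- The defect `∑ |K X - X K|²` expands to `Φ(XXᴴ) - Φ(X)Xᴴ - XΦ(Xᴴ) + XΦ(1)Xᴴ`, which vanishes. -/
theorem commute_of_krausMap_eq {K : ι → Matrix d d 𝕜} {X : Matrix d d 𝕜}
    (hone : krausMap K 1 = 1) (hX : krausMap K X = X) (hXH : krausMap K Xᴴ = Xᴴ)
    (hXXH : krausMap K (X * Xᴴ) = X * Xᴴ) (c : ι) : Commute (K c) X := by
  have expand : ∀ c, (K c * X - X * K c) * (K c * X - X * K c)ᴴ
      = K c * (X * Xᴴ) * (K c)ᴴ - K c * X * (K c)ᴴ * Xᴴ - X * (K c * Xᴴ * (K c)ᴴ)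
        + X * (K c * 1 * (K c)ᴴ) * Xᴴ := fun c => by
    simp only [conjTranspose_sub, conjTranspose_mul, mul_one]
    noncomm_ring
  have defect : ∑ c, (K c * X - X * K c) * (K c * X - X * K c)ᴴ = 0 := by
    simp only [krausMap_apply] at hone hX hXH hXXH
    simp only [expand, Finset.sum_add_distrib, Finset.sum_sub_distrib, ← Finset.sum_mul,
      ← Finset.mul_sum, hone, hX, hXH, hXXH]
    simp
  exact sub_eq_zero.mp (sum_mul_conjTranspose_eq_zero_iff.mp defect c)

theorem traceLeft_krausMap_kronecker {α β : Type*} [Fintype α] [Fintype β] [DecidableEq α]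
    [DecidableEq β] [Nonempty β] {K : ι → Matrix (α × β) (α × β) 𝕜}
    (htp : ∑ c, (K c)ᴴ * K c = 1) (hfix : ∀ τ, krausMap K (1 ⊗ₖ τ) = 1 ⊗ₖ τ)
    (X : Matrix α α 𝕜) (Y : Matrix β β 𝕜) :
    traceLeft (krausMap K (X ⊗ₖ Y)) = X.trace • Y := by
  have hcomm (c : ι) (τ : Matrix β β 𝕜) : Commute (K c) (1 ⊗ₖ τ) :=
    commute_of_krausMap_eq (by simpa using hfix 1) (hfix τ)
      (by simpa [conjTranspose_kronecker] using hfix τᴴ)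
      (by simpa [conjTranspose_kronecker, ← mul_kronecker_mul] using hfix (τ * τᴴ)) c
  choose C hC using fun c => exists_eq_kronecker_one_of_commute (hcomm c)
  have htpC : ∑ c, (C c)ᴴ * C c = 1 := kronecker_one_injective (β := β) <| by
    simpa [hC, conjTranspose_kronecker, ← mul_kronecker_mul, ← sum_kronecker_s2] using htp
  have hK : krausMap K (X ⊗ₖ Y) = krausMap C X ⊗ₖ Y := by
    simp [krausMap_apply, hC, conjTranspose_kronecker, ← mul_kronecker_mul, sum_kronecker_s2]
  rw [hK, traceLeft_kronecker, trace_krausMap htpC]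

end Kraus

section Blocks

theorem toBlocks₁₁_sum {α ι l o : Type*} [AddCommMonoid α] [Fintype ι]
    (f : ι → Matrix (l ⊕ o) (l ⊕ o) α) : (∑ c, f c).toBlocks₁₁ = ∑ c, (f c).toBlocks₁₁ := by
  ext i j
  simp [toBlocks₁₁, sum_apply]

theorem trace_fromBlocks {α l o : Type*} [AddCommMonoid α] [Fintype l] [Fintype o]
    (A : Matrix l l α) (B : Matrix l o α) (C : Matrix o l α) (D : Matrix o o α) :
    (fromBlocks A B C D).trace = A.trace + D.trace := by
  simp [trace, Fintype.sum_sum_type]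

variable {𝕜 ι l o : Type*} [RCLike 𝕜] [Fintype ι] [Fintype l] [Fintype o]

theorem toBlocks₁₁_conjTranspose_mul_self (N : Matrix (l ⊕ o) (l ⊕ o) 𝕜) :
    (Nᴴ * N).toBlocks₁₁ = N.toBlocks₁₁ᴴ * N.toBlocks₁₁ + N.toBlocks₂₁ᴴ * N.toBlocks₂₁ := by
  conv_lhs => rw [← fromBlocks_toBlocks N]
  simp [fromBlocks_conjTranspose, fromBlocks_multiply]

theorem toBlocks₁₁_krausMap_fromBlocks (K : ι → Matrix (l ⊕ o) (l ⊕ o) 𝕜) (M : Matrix l l 𝕜) :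
    (krausMap K (fromBlocks M 0 0 0)).toBlocks₁₁ = krausMap (fun c => (K c).toBlocks₁₁) M := by
  ext i j
  simp [krausMap_apply, toBlocks₁₁, sum_apply, mul_apply, Fintype.sum_sum_type]

theorem toBlocks₂₂_krausMap_fromBlocks (K : ι → Matrix (l ⊕ o) (l ⊕ o) 𝕜) (M : Matrix l l 𝕜) :
    (krausMap K (fromBlocks M 0 0 0)).toBlocks₂₂
      = ∑ c, (K c).toBlocks₂₁ * M * (K c).toBlocks₂₁ᴴ := by
  ext i j
  simp [krausMap_apply, toBlocks₂₂, toBlocks₂₁, sum_apply, mul_apply, Fintype.sum_sum_type]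

end Blocks

end Matrix

namespace IsQuantumOperation

variable {d : Type} [Fintype d] [DecidableEq d]

theorem of_krausMap {ι : Type} [Fintype ι] {K : ι → Matrix d d ℂ}
    (htp : ∑ c, (K c)ᴴ * K c = 1) : IsQuantumOperation (krausMap K) :=
  ⟨ι, inferInstance, K, fun _ => rfl, htp⟩

theorem id : IsQuantumOperation (LinearMap.id : Matrix d d ℂ →ₗ[ℂ] Matrix d d ℂ) :=
  ⟨Unit, inferInstance, fun _ => 1, fun _ => by simp, by simp⟩

theorem trace_eq {E : Matrix d d ℂ →ₗ[ℂ] Matrix d d ℂ} (hE : IsQuantumOperation E)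
    (ρ : Matrix d d ℂ) : (E ρ).trace = ρ.trace := by
  obtain ⟨ι, _, K, hK, htp⟩ := hE
  exact (hK ρ).symm ▸ trace_krausMap htp ρ

theorem comp {R S : Matrix d d ℂ →ₗ[ℂ] Matrix d d ℂ} (hR : IsQuantumOperation R)
    (hS : IsQuantumOperation S) : IsQuantumOperation (R ∘ₗ S) := by
  obtain ⟨ι, _, K, hK, htpK⟩ := hR
  obtain ⟨κ, _, L, hL, htpL⟩ := hS
  refine ⟨ι × κ, inferInstance, fun x => K x.1 * L x.2, fun ρ => ?_, ?_⟩
  · simp only [LinearMap.comp_apply, hK, hL, Finset.mul_sum, Finset.sum_mul,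
      Fintype.sum_prod_type, conjTranspose_mul, mul_assoc]
  · calc ∑ x : ι × κ, (K x.1 * L x.2)ᴴ * (K x.1 * L x.2)
        = ∑ b, (L b)ᴴ * (∑ a, (K a)ᴴ * K a) * L b := by
          simp only [Fintype.sum_prod_type, Finset.mul_sum, Finset.sum_mul, conjTranspose_mul,
            mul_assoc]
          exact Finset.sum_comm
      _ = 1 := by simpa [htpK] using htpL

end IsQuantumOperation

section Correctability

variable {m n p : ℕ}

theorem embed_eq_fromBlocks (M : Matrix (Fin m × Fin n) (Fin m × Fin n) ℂ) :
    embed (p := p) M = fromBlocks M 0 0 0 := rfl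

theorem embed_sum {ι : Type*} [Fintype ι] (f : ι → Matrix (Fin m × Fin n) (Fin m × Fin n) ℂ) :
    embed (p := p) (∑ c, f c) = ∑ c, embed (f c) := by
  ext (x | x) (y | y) <;> simp [embed, Matrix.sum_apply]

theorem embed_smul (a : ℂ) (M : Matrix (Fin m × Fin n) (Fin m × Fin n) ℂ) :
    embed (p := p) (a • M) = a • embed M := by
  simp [embed, fromBlocks_smul]

theorem embed_mul_mul (M N : Matrix (Fin m × Fin n) (Fin m × Fin n) ℂ)
    (ρ : Matrix (HIdx m n p) (HIdx m n p) ℂ) :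
    embed M * ρ * embed N = embed (M * ρ.toBlocks₁₁ * N) := by
  conv_lhs => rw [← fromBlocks_toBlocks ρ]
  simp [embed, fromBlocks_multiply]

theorem trA_eq_traceLeft (ρ : Matrix (HIdx m n p) (HIdx m n p) ℂ) :
    trA ρ = traceLeft ρ.toBlocks₁₁ := rfl

theorem trA_embed (M : Matrix (Fin m × Fin n) (Fin m × Fin n) ℂ) :
    trA (embed (p := p) M) = traceLeft M := rfl

theorem trA_PA_mul_mul (ρ : Matrix (HIdx m n p) (HIdx m n p) ℂ) :
    trA (PA m n p * ρ * PA m n p) = trA ρ := by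
  rw [PA, embed_mul_mul, one_mul, mul_one, trA_embed, trA_eq_traceLeft]

theorem trA_PA_mul_mul_of_fixed [Nonempty (Fin n)]
    {Φ : Matrix (HIdx m n p) (HIdx m n p) ℂ →ₗ[ℂ] Matrix (HIdx m n p) (HIdx m n p) ℂ}
    (hΦ : IsQuantumOperation Φ) (hfix : ∀ τ, Φ (embed (1 ⊗ₖ τ)) = embed (1 ⊗ₖ τ))
    (X : Matrix (Fin m) (Fin m) ℂ) (Y : Matrix (Fin n) (Fin n) ℂ) :
    trA (PA m n p * Φ (embed (X ⊗ₖ Y)) * PA m n p) = X.trace • Y := by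
  obtain ⟨ι, _, N, hN, htp⟩ := hΦ
  obtain rfl : Φ = krausMap N := LinearMap.ext hN
  simp only [embed_eq_fromBlocks] at hfix
  have hfixA (τ : Matrix (Fin n) (Fin n) ℂ) :
      krausMap (fun c => (N c).toBlocks₁₁) (1 ⊗ₖ τ) = 1 ⊗ₖ τ := by
    simpa [toBlocks₁₁_krausMap_fromBlocks] using congr_arg toBlocks₁₁ (hfix τ)
  have hleak : ∀ c, (N c).toBlocks₂₁ = 0 := sum_mul_conjTranspose_eq_zero_iff.mp <| by
    simpa [toBlocks₂₂_krausMap_fromBlocks] using congr_arg toBlocks₂₂ (hfix 1)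
  have htpA : ∑ c, (N c).toBlocks₁₁ᴴ * (N c).toBlocks₁₁ = 1 := by
    simpa [toBlocks₁₁_sum, toBlocks₁₁_conjTranspose_mul_self, hleak, ← fromBlocks_one]
      using congr_arg toBlocks₁₁ htp
  rw [trA_PA_mul_mul, trA_eq_traceLeft, embed_eq_fromBlocks, toBlocks₁₁_krausMap_fromBlocks]
  exact traceLeft_krausMap_kronecker htpA hfixA X Y

theorem Pmu_conjTranspose (a b : Fin m) : (Pmu n p a b)ᴴ = Pmu n p b a := by
  simp [Pmu, embed, fromBlocks_conjTranspose, conjTranspose_kronecker]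

theorem Pmu_mul_Pmu (a b c : Fin m) :
    Pmu n p a b * Pmu n p b c = embed (single a c 1 ⊗ₖ (1 : Matrix (Fin n) (Fin n) ℂ)) := by
  simp [Pmu, embed, fromBlocks_multiply, ← mul_kronecker_mul]

def resetKraus (x₀ : Fin m × Fin n) :
    (Fin m × Fin m) ⊕ Fin p → Matrix (HIdx m n p) (HIdx m n p) ℂ :=
  Sum.elim (fun ab => ((Real.sqrt m : ℂ))⁻¹ • Pmu n p ab.1 ab.2)
    (fun j => single (Sum.inl x₀) (Sum.inr j) 1)

theorem star_inv_sqrt_natCast_mul_self :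
    star ((Real.sqrt m : ℂ))⁻¹ * ((Real.sqrt m : ℂ))⁻¹ = (m : ℂ)⁻¹ := by
  rw [star_inv₀, Complex.star_def, Complex.conj_ofReal, ← mul_inv, ← Complex.ofReal_mul,
    Real.mul_self_sqrt (Nat.cast_nonneg m), Complex.ofReal_natCast]

theorem krausMap_resetKraus (x₀ : Fin m × Fin n) (ρ : Matrix (HIdx m n p) (HIdx m n p) ℂ) :
    krausMap (resetKraus x₀) ρ
      = (m : ℂ)⁻¹ • embed (1 ⊗ₖ trA ρ) + single (Sum.inl x₀) (Sum.inl x₀) ρ.toBlocks₂₂.trace := by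
  rw [krausMap_apply, Fintype.sum_sum_type]
  congr 1
  · simp only [resetKraus, Sum.elim_inl, conjTranspose_smul, smul_mul_assoc, mul_smul_comm,
      smul_smul, star_inv_sqrt_natCast_mul_self, Pmu_conjTranspose, ← Finset.smul_sum]
    rw [Fintype.sum_prod_type]
    simp only [Pmu, embed_mul_mul, ← embed_sum, sum_single_kronecker_one_mul_mul, trA_eq_traceLeft]
  · ext x y
    simp [resetKraus, conjTranspose_single, Matrix.sum_apply, single_apply, trace, toBlocks₂₂]

theorem sum_conjTranspose_mul_resetKraus (x₀ : Fin m × Fin n) :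
    ∑ c, (resetKraus (p := p) x₀ c)ᴴ * resetKraus x₀ c = 1 := by
  have hm : (m : ℂ) ≠ 0 := Nat.cast_ne_zero.mpr (Fin.pos x₀.1).ne'
  have hAB : ∑ ab : Fin m × Fin m, (resetKraus (p := p) x₀ (.inl ab))ᴴ * resetKraus x₀ (.inl ab)
      = fromBlocks 1 0 0 0 := by
    simp only [resetKraus, Sum.elim_inl, conjTranspose_smul, smul_mul_smul_comm,
      star_inv_sqrt_natCast_mul_self, Pmu_conjTranspose, Pmu_mul_Pmu, ← Finset.smul_sum,
      Fintype.sum_prod_type, Finset.sum_const, Finset.card_univ, Fintype.card_fin]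
    rw [← Nat.cast_smul_eq_nsmul ℂ, smul_smul, inv_mul_cancel₀ hm, one_smul, ← embed_sum,
      ← sum_kronecker_s2, sum_single_one, one_kronecker_one, embed_eq_fromBlocks]
  have hK : ∑ j : Fin p, (resetKraus (p := p) x₀ (.inr j))ᴴ * resetKraus x₀ (.inr j)
      = fromBlocks 0 0 0 1 := by
    ext (x | x) (y | y) <;>
      simp [resetKraus, conjTranspose_single, Matrix.sum_apply, single_apply, one_apply, ite_and]
  rw [Fintype.sum_sum_type, hAB, hK, fromBlocks_add]
  simp

theorem exists_recovery_of_trA_eq [Nonempty (Fin m × Fin n)]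
    {Φ : Matrix (HIdx m n p) (HIdx m n p) ℂ →ₗ[ℂ] Matrix (HIdx m n p) (HIdx m n p) ℂ}
    (htp : ∀ ρ, (Φ ρ).trace = ρ.trace)
    (hcorr : ∀ τ, trA (PA m n p * Φ (embed (1 ⊗ₖ τ)) * PA m n p)
      = trA (embed (p := p) ((1 : Matrix (Fin m) (Fin m) ℂ) ⊗ₖ τ))) :
    ∃ W, IsQuantumOperation W ∧ ∀ τ, W (Φ (embed (1 ⊗ₖ τ))) = embed (1 ⊗ₖ τ) := by
  obtain ⟨x₀⟩ := ‹Nonempty (Fin m × Fin n)›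
  have hm : (m : ℂ) ≠ 0 := Nat.cast_ne_zero.mpr (Fin.pos x₀.1).ne'
  refine ⟨krausMap (resetKraus x₀), .of_krausMap (sum_conjTranspose_mul_resetKraus x₀),
    fun τ => ?_⟩
  set ρ := Φ (embed (1 ⊗ₖ τ))
  have htrA : trA ρ = (m : ℂ) • τ := by
    simpa [trA_PA_mul_mul, trA_embed, traceLeft_kronecker] using hcorr τ
  have hleak : ρ.toBlocks₂₂.trace = 0 := by
    have h : ρ.trace = _ := htp (embed (1 ⊗ₖ τ))
    rw [← fromBlocks_toBlocks ρ, embed_eq_fromBlocks, trace_fromBlocks, trace_fromBlocks,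
      ← trace_traceLeft ρ.toBlocks₁₁, ← trA_eq_traceLeft, htrA, trace_smul, trace_kronecker,
      trace_one, trace_zero, add_zero, Fintype.card_fin, smul_eq_mul, add_eq_left] at h
    exact h
  rw [krausMap_resetKraus, htrA, hleak, single_zero, add_zero, kronecker_smul, embed_smul,
    smul_smul, inv_mul_cancel₀ hm, one_smul]

end Correctability

/-- The `H^B` sector of the semigroup `𝔄` is correctable for `E` iff the C*-algebra
`1^A ⊗ B(H^B)` can be corrected precisely by some quantum operation. -/
theorem correctable_iff_algebra_correctable {m n p : ℕ}
    (E : Matrix (HIdx m n p) (HIdx m n p) ℂ →ₗ[ℂ] Matrix (HIdx m n p) (HIdx m n p) ℂ)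
    (hE : IsQuantumOperation E) :
    (∃ R : Matrix (HIdx m n p) (HIdx m n p) ℂ →ₗ[ℂ] Matrix (HIdx m n p) (HIdx m n p) ℂ,
      IsQuantumOperation R ∧
      ∀ σ : Matrix (HIdx m n p) (HIdx m n p) ℂ,
        (∃ (σA : Matrix (Fin m) (Fin m) ℂ) (σB : Matrix (Fin n) (Fin n) ℂ),
            σ = embed (σA ⊗ₖ σB)) →
        trA (PA m n p * R (E σ) * PA m n p) = trA σ) ↔
    (∃ R' : Matrix (HIdx m n p) (HIdx m n p) ℂ →ₗ[ℂ] Matrix (HIdx m n p) (HIdx m n p) ℂ,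
      IsQuantumOperation R' ∧
      ∀ σB : Matrix (Fin n) (Fin n) ℂ,
        R' (E (embed ((1 : Matrix (Fin m) (Fin m) ℂ) ⊗ₖ σB)))
          = embed ((1 : Matrix (Fin m) (Fin m) ℂ) ⊗ₖ σB)) := by
  rcases isEmpty_or_nonempty (Fin m × Fin n) with hAB | hAB
  · have hzero (M : Matrix (Fin m × Fin n) (Fin m × Fin n) ℂ) : embed (p := p) M = 0 := by
      rw [Subsingleton.elim M 0, embed_eq_fromBlocks, fromBlocks_zero]
    exact ⟨fun _ => ⟨.id, .id, by simp [hzero]⟩,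
      fun _ => ⟨.id, .id, by rintro _ ⟨σA, σB, rfl⟩; simp [hzero]⟩⟩
  have : Nonempty (Fin n) := hAB.map Prod.snd
  constructor
  · rintro ⟨R, hR, hcorr⟩
    obtain ⟨W, hW, hWR⟩ := exists_recovery_of_trA_eq (Φ := R ∘ₗ E) (hR.comp hE).trace_eq
      fun τ => hcorr _ ⟨1, τ, rfl⟩
    exact ⟨W ∘ₗ R, hW.comp hR, hWR⟩
  · rintro ⟨R', hR', hfix⟩
    refine ⟨R', hR', ?_⟩
    rintro _ ⟨σA, σB, rfl⟩
    rw [trA_embed, traceLeft_kronecker]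
    exact trA_PA_mul_mul_of_fixed (hR'.comp hE) hfix σA σB
end
end

section
/- Let C be a subspace of a finite-dimensional Hilbert space H with projection P_C, and let {E_a} and {F_c} be two families of operators on H giving operator-sum representations of the same quantum operation E, i.e. Σ_a E_a ρ E_a† = Σ_c F_c ρ F_c† for all ρ ∈ B(H), with Σ_a E_a† E_a = 1 = Σ_c F_c† F_c. If there exists a scalar matrix (λ_{ab}) with P_C E_a† E_b P_C = λ_{ab} P_C for all a, b, then there also exists a scalar matrix (λ'_{cd}) with P_C F_c† F_d P_C = λ'_{cd} P_C for all c, d. -/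
open scoped Kronecker Matrix

noncomputable section

/-!
The Choi matrix `∑ a, vec (E a) vec (E a)ᴴ` of a Kraus family is determined by the operation:
its entries are read off from the images of the matrix units. Hence for every linear functional
`φ` the quantity `∑ a, |φ (E a)|²` is the same for both families, so a functional vanishing on
all `E a` vanishes on every `F c`, i.e. each `F c` is a linear combination `∑ a, u c a • E a`.
The Knill–Laflamme condition is sesquilinear in the operators, so it passes to such combinations,
with `λ' c e = ∑ a b, conj (u c a) * u e b * λ a b`.
-/

open Matrix

namespace Matrix

variable {l m n o R : Type*}

lemma mul_single_one_mul_conjTranspose_apply [Fintype m] [Fintype n] [DecidableEq m]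
    [DecidableEq n] [Semiring R] [StarRing R] (A : Matrix l m R) (B : Matrix o n R)
    (i : l) (j : o) (k : m) (k' : n) :
    (A * single k k' (1 : R) * Bᴴ) i j = A i k * star (B j k') := by
  simp [mul_apply, single_apply, ite_and]

lemma dual_apply_eq_sum [Fintype m] [Fintype n] [DecidableEq m] [DecidableEq n] [Semiring R]
    (φ : Module.Dual R (Matrix m n R)) (M : Matrix m n R) :
    φ M = ∑ i, ∑ j, M i j * φ (single i j 1) := by
  conv_lhs => rw [matrix_eq_sum_single M]
  simp only [map_sum]
  congr! with i _ j
  rw [← smul_eq_mul, ← map_smul, smul_single, smul_eq_mul, mul_one]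

end Matrix

section Kraus

variable {ι κ m n R : Type*} [Fintype ι] [Fintype κ] [Fintype n]

def krausSum [Semiring R] [StarRing R] (E : ι → Matrix m n R) (ρ : Matrix n n R) :
    Matrix m m R :=
  ∑ a, E a * ρ * (E a)ᴴ

lemma sum_dual_mul_star_eq_sum_krausSum [Fintype m] [DecidableEq m] [DecidableEq n]
    [CommSemiring R] [StarRing R] (φ : Module.Dual R (Matrix m n R)) (E : ι → Matrix m n R) :
    ∑ a, φ (E a) * star (φ (E a)) =
      ∑ i, ∑ k, ∑ j, ∑ k', krausSum E (single k k' 1) i j *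
        (φ (single i k 1) * star (φ (single j k' 1))) := by
  simp only [krausSum, Matrix.sum_apply, mul_single_one_mul_conjTranspose_apply,
    dual_apply_eq_sum φ (E _), star_sum, star_mul', Finset.sum_mul]
  -- `Finset.mul_sum` only now, so that the summation order becomes `a, i, k, j, k'`
  simp only [Finset.mul_sum]
  refine Finset.sum_comm.trans <| Finset.sum_congr rfl fun i _ => ?_
  refine Finset.sum_comm.trans <| Finset.sum_congr rfl fun k _ => ?_
  refine Finset.sum_comm.trans <| Finset.sum_congr rfl fun j _ => ?_
  refine Finset.sum_comm.trans <| Finset.sum_congr rfl fun k' _ => ?_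
  exact Finset.sum_congr rfl fun a _ => by ring

open scoped ComplexOrder in
theorem mem_span_range_of_krausSum_eq [Fintype m] {𝕜 : Type*} [RCLike 𝕜]
    {E : ι → Matrix m n 𝕜} {F : κ → Matrix m n 𝕜} (h : krausSum E = krausSum F) (c : κ) :
    F c ∈ Submodule.span 𝕜 (Set.range E) := by
  classical
  by_contra hc
  obtain ⟨φ, hφc, hφspan⟩ := Submodule.exists_dual_map_eq_bot_of_notMem hc inferInstance
  have hφE : ∀ a, φ (E a) = 0 := fun a =>
    LinearMap.le_ker_iff_map.mpr hφspan (Submodule.subset_span ⟨a, rfl⟩)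
  have hsum : ∑ c, φ (F c) * star (φ (F c)) = 0 := by
    rw [sum_dual_mul_star_eq_sum_krausSum, ← h, ← sum_dual_mul_star_eq_sum_krausSum]
    simp [hφE]
  have hφFc := (Finset.sum_eq_zero_iff_of_nonneg fun c _ => mul_star_self_nonneg (φ (F c))).mp
    hsum c (Finset.mem_univ c)
  exact hφc (CStarRing.mul_star_self_eq_zero_iff _ |>.mp hφFc)

end Kraus

section KnillLaflamme

variable {ι κ n R : Type*} [Fintype ι] [Fintype n] [CommRing R] [StarRing R]

def KnillLaflammeCondition (P : Matrix n n R) (E : ι → Matrix n n R) : Prop :=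
  ∃ lam : ι → ι → R, ∀ a b, P * (E a)ᴴ * E b * P = lam a b • P

theorem KnillLaflammeCondition.of_forall_mem_span {P : Matrix n n R} {E : ι → Matrix n n R}
    {F : κ → Matrix n n R} (hE : KnillLaflammeCondition P E)
    (hF : ∀ c, F c ∈ Submodule.span R (Set.range E)) : KnillLaflammeCondition P F := by
  obtain ⟨lam, hlam⟩ := hE
  choose u hu using fun c => (Submodule.mem_span_range_iff_exists_fun R).mp (hF c)
  refine ⟨fun c e => ∑ a, ∑ b, star (u c a) * u e b * lam a b, fun c e => ?_⟩
  simp only [← hu, conjTranspose_sum, conjTranspose_smul, Matrix.mul_sum, Matrix.sum_mul,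
    Matrix.mul_smul, Matrix.smul_mul, hlam, smul_smul, Finset.smul_sum, Finset.sum_smul]
  rw [Finset.sum_comm]
  exact Finset.sum_congr rfl fun a _ => Finset.sum_congr rfl fun b _ => by rw [mul_comm (u e b)]

end KnillLaflamme

theorem knill_laflamme_representation_independent_general {d ι κ : Type}
    [Fintype d] [Fintype ι] [Fintype κ]
    (P : Matrix d d ℂ)
    (E : ι → Matrix d d ℂ) (F : κ → Matrix d d ℂ)
    (hsame : ∀ ρ : Matrix d d ℂ, ∑ a, E a * ρ * (E a)ᴴ = ∑ c, F c * ρ * (F c)ᴴ)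
    (hKL : ∃ lam : ι → ι → ℂ, ∀ a b, P * (E a)ᴴ * E b * P = lam a b • P) :
    ∃ lam' : κ → κ → ℂ, ∀ c e, P * (F c)ᴴ * F e * P = lam' c e • P :=
  KnillLaflammeCondition.of_forall_mem_span hKL (mem_span_range_of_krausSum_eq (funext hsame))

/-- The Knill–Laflamme condition is independent of the operator-sum representation:
if it holds for one Kraus family of a quantum operation, it holds for any other. -/
theorem knill_laflamme_representation_independent {d ι κ : Type}
    [Fintype d] [DecidableEq d] [Fintype ι] [Fintype κ]
    (P : Matrix d d ℂ) (hPproj : P * P = P) (hPsa : Pᴴ = P)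
    (E : ι → Matrix d d ℂ) (F : κ → Matrix d d ℂ)
    (hsame : ∀ ρ : Matrix d d ℂ, ∑ a, E a * ρ * (E a)ᴴ = ∑ c, F c * ρ * (F c)ᴴ)
    (hETP : ∑ a, (E a)ᴴ * E a = 1)
    (hFTP : ∑ c, (F c)ᴴ * F c = 1)
    (hKL : ∃ lam : ι → ι → ℂ, ∀ a b, P * (E a)ᴴ * E b * P = lam a b • P) :
    ∃ lam' : κ → κ → ℂ, ∀ c e, P * (F c)ᴴ * F e * P = lam' c e • P :=
  knill_laflamme_representation_independent_general P E F hsame hKL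
end
end

section
/- Let C be a subspace of a finite-dimensional Hilbert space H with projection P_C, and let E = {E_a} be a quantum operation on B(H) such that for each a there is a unitary U_a on H and a scalar c_a with E_a P_C = c_a U_a P_C, and such that the subspaces U_a C are mutually orthogonal. Let P_a denote the projection of H onto U_a C. Then the operators {U_a† P_a} (together, if necessary, with a Kraus operator supported on the complement of ⊕_a U_a C to ensure trace preservation) define a quantum operation R on B(H) satisfying (R ∘ E)(σ) = σ for all σ ∈ B(C); moreover P_C E_a† E_b P_C = δ_{ab} |c_a|² P_C for all a, b, so the matrix Λ = (λ_{ab}) with λ_{ab} = δ_{ab}|c_a|² is positive and diagonal. -/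
open scoped Kronecker Matrix ComplexOrder

noncomputable section

/-!
On `B(C)` every Kraus operator acts as a scaled unitary, `E_a σ E_a† = |c_a|² U_a σ U_a†`,
and orthogonality of the images gives `P U_a† U_b P = δ_ab P`. Hence `U_a† P_a U_b P = δ_ab P`
and `(1 - ∑ P_a) U_b P = 0`, so the recovery operation sends each `U_b σ U_b†` back to `σ`;
the weights `|c_b|²` add up to `1` on `C` because `E` is trace preserving. The argument is
pure algebra in a star algebra.
-/

open Finset

section StarRing

variable {A : Type*} [Ring A] [StarRing A]

theorem IsStarProjection.conj_of_star_mul_self {P U : A} (hP : IsStarProjection P)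
    (hU : star U * U = 1) : IsStarProjection (U * P * star U) where
  isIdempotentElem := by
    calc U * P * star U * (U * P * star U) = U * (P * (star U * U) * P) * star U := by
          simp only [mul_assoc]
      _ = U * P * star U := by rw [hU, mul_one, hP.isIdempotentElem.eq, mul_assoc]
  isSelfAdjoint := hP.isSelfAdjoint.conjugate U

theorem OrthogonalIdempotents.isStarProjection_sum {ι : Type*} [Fintype ι] {e : ι → A}
    (he : OrthogonalIdempotents e) (hsa : ∀ a, IsSelfAdjoint (e a)) :
    IsStarProjection (∑ a, e a) :=
  ⟨he.isIdempotentElem_sum, isSelfAdjoint_sum _ fun a _ => hsa a⟩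

theorem conj_conj_eq_of_eq_proj_mul_mul_proj {P σ : A} (hP : IsSelfAdjoint P)
    (hσ : σ = P * σ * P) (K V : A) :
    K * (V * σ * star V) * star K = K * V * P * σ * star (K * V * P) := by
  conv_lhs => rw [hσ]
  simp only [star_mul, hP.star_eq, mul_assoc]

variable {ι : Type*} {P : A} {U : ι → A}

/-- The paper's `U_a† P_a`, where `P_a = U_a P U_a†` is the projection onto `U_a C`. -/
def recoveryKraus (U : ι → A) (P : A) (a : ι) : A :=
  star (U a) * (U a * P * star (U a))

def recoveryComplement [Fintype ι] (U : ι → A) (P : A) : A :=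
  1 - ∑ a, U a * P * star (U a)

theorem proj_mul_star_mul_mul_proj_eq_ite [DecidableEq ι] (hP : IsIdempotentElem P)
    (hU : ∀ a, star (U a) * U a = 1) (horth : ∀ a b, a ≠ b → P * star (U a) * U b * P = 0)
    (a b : ι) : P * star (U a) * U b * P = if a = b then P else 0 := by
  split_ifs with hab
  · rw [hab, mul_assoc P, hU, mul_one, hP.eq]
  · exact horth a b hab

theorem orthogonalIdempotents_conj (hP : IsStarProjection P) (hU : ∀ a, star (U a) * U a = 1)
    (horth : ∀ a b, a ≠ b → P * star (U a) * U b * P = 0) :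
    OrthogonalIdempotents fun a => U a * P * star (U a) := by
  refine ⟨fun a => (hP.conj_of_star_mul_self (hU a)).isIdempotentElem, fun a b hab => ?_⟩
  calc U a * P * star (U a) * (U b * P * star (U b))
      = U a * (P * star (U a) * U b * P) * star (U b) := by simp only [mul_assoc]
    _ = 0 := by rw [horth a b hab, mul_zero, zero_mul]

theorem recoveryKraus_mul_mul_proj [DecidableEq ι] (hP : IsIdempotentElem P)
    (hU : ∀ a, star (U a) * U a = 1) (horth : ∀ a b, a ≠ b → P * star (U a) * U b * P = 0)
    (a b : ι) : recoveryKraus U P a * U b * P = if a = b then P else 0 := by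
  rw [← proj_mul_star_mul_mul_proj_eq_ite hP hU horth a b]
  simp only [recoveryKraus, ← mul_assoc, hU, one_mul]

theorem recoveryComplement_mul_mul_proj [Fintype ι] (hP : IsIdempotentElem P)
    (hU : ∀ a, star (U a) * U a = 1) (horth : ∀ a b, a ≠ b → P * star (U a) * U b * P = 0)
    (b : ι) : recoveryComplement U P * U b * P = 0 := by
  classical
  have hPa a : U a * P * star (U a) * U b * P = if a = b then U a * P else 0 := by
    simpa only [mul_ite, mul_zero, ← mul_assoc] using
      congrArg (U a * ·) (proj_mul_star_mul_mul_proj_eq_ite hP hU horth a b)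
  simp only [recoveryComplement, sub_mul, one_mul, sum_mul, hPa, sum_ite_eq', mem_univ, if_true,
    sub_self]

theorem recovery_comp_unitary_conj_eq_self [Fintype ι] [DecidableEq ι] (hP : IsStarProjection P)
    (hU : ∀ a, star (U a) * U a = 1) (horth : ∀ a b, a ≠ b → P * star (U a) * U b * P = 0)
    {σ : A} (hσ : σ = P * σ * P) (b : ι) :
    (∑ a, recoveryKraus U P a * (U b * σ * star (U b)) * star (recoveryKraus U P a)) +
      recoveryComplement U P * (U b * σ * star (U b)) * star (recoveryComplement U P) = σ := by
  simp only [conj_conj_eq_of_eq_proj_mul_mul_proj hP.isSelfAdjoint hσ,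
    recoveryKraus_mul_mul_proj hP.isIdempotentElem hU horth,
    recoveryComplement_mul_mul_proj hP.isIdempotentElem hU horth, zero_mul, add_zero]
  simpa [hP.isSelfAdjoint.star_eq] using hσ.symm

theorem sum_star_recoveryKraus_mul_self_add_eq_one [Fintype ι] (hP : IsStarProjection P)
    (hU : ∀ a, U a ∈ unitary A) (horth : ∀ a b, a ≠ b → P * star (U a) * U b * P = 0) :
    (∑ a, star (recoveryKraus U P a) * recoveryKraus U P a) +
      star (recoveryComplement U P) * recoveryComplement U P = 1 := by
  have hiso a := Unitary.star_mul_self_of_mem (hU a)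
  have hPa a := hP.conj_of_star_mul_self (hiso a)
  have hQ : IsStarProjection (recoveryComplement U P) :=
    ((orthogonalIdempotents_conj hP hiso horth).isStarProjection_sum
      fun a => (hPa a).isSelfAdjoint).one_sub
  have hterm a : star (recoveryKraus U P a) * recoveryKraus U P a = U a * P * star (U a) := by
    rw [recoveryKraus, star_mul, star_star, (hPa a).isSelfAdjoint.star_eq, mul_assoc,
      ← mul_assoc (U a), Unitary.mul_star_self_of_mem (hU a), one_mul,
      (hPa a).isIdempotentElem.eq]
  rw [sum_congr rfl fun a _ => hterm a, hQ.isSelfAdjoint.star_eq, hQ.isIdempotentElem.eq,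
    recoveryComplement, add_sub_cancel]

end StarRing

section Algebra

variable {R A : Type*} [CommSemiring R] [StarRing R] [Ring A] [StarRing A] [Algebra R A]
  [StarModule R A] {P : A}

theorem proj_mul_star_eq_of_mul_proj_eq_smul (hP : IsSelfAdjoint P) {E U : A} {c : R}
    (hE : E * P = c • (U * P)) : P * star E = star c • (P * star U) := by
  simpa only [star_mul, star_smul, hP.star_eq] using congrArg star hE

theorem conj_eq_of_mul_proj_eq_smul (hP : IsSelfAdjoint P) {E U σ : A} {c : R}
    (hE : E * P = c • (U * P)) (hσ : σ = P * σ * P) :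
    E * σ * star E = (star c * c) • (U * σ * star U) := by
  have hleft : E * σ = c • (U * σ) := by
    rw [hσ, ← mul_assoc, ← mul_assoc, hE, smul_mul_assoc, smul_mul_assoc]
    simp only [mul_assoc]
  have hright : σ * star E = star c • (σ * star U) := by
    rw [hσ, mul_assoc, proj_mul_star_eq_of_mul_proj_eq_smul hP hE, mul_smul_comm]
    simp only [mul_assoc]
  rw [mul_assoc, hright, mul_smul_comm, ← mul_assoc, hleft, smul_mul_assoc, smul_smul]

variable {ι : Type*} [DecidableEq ι] {E U : ι → A} {c : ι → R}

theorem proj_mul_star_mul_mul_proj_eq_ite_smul (hP : IsStarProjection P)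
    (hU : ∀ a, star (U a) * U a = 1) (horth : ∀ a b, a ≠ b → P * star (U a) * U b * P = 0)
    (hE : ∀ a, E a * P = c a • (U a * P)) (a b : ι) :
    P * star (E a) * E b * P = (if a = b then star (c a) * c a else 0) • P := by
  calc P * star (E a) * E b * P = (star (c a) * c b) • (P * star (U a) * U b * P) := by
        rw [mul_assoc _ (E b), hE, proj_mul_star_eq_of_mul_proj_eq_smul hP.isSelfAdjoint (hE a),
          smul_mul_smul_comm, mul_assoc _ (U b)]
    _ = _ := by
        rw [proj_mul_star_mul_mul_proj_eq_ite hP.isIdempotentElem hU horth]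
        split_ifs with hab <;> simp [hab]

variable [Fintype ι]

theorem sum_smul_proj_eq_proj (hP : IsStarProjection P)
    (hU : ∀ a, star (U a) * U a = 1) (horth : ∀ a b, a ≠ b → P * star (U a) * U b * P = 0)
    (hE : ∀ a, E a * P = c a • (U a * P)) (hTP : ∑ a, star (E a) * E a = 1) :
    (∑ a, star (c a) * c a) • P = P := by
  calc (∑ a, star (c a) * c a) • P = P * (∑ a, star (E a) * E a) * P := by
        simp only [sum_smul, mul_sum, sum_mul, ← mul_assoc,
          proj_mul_star_mul_mul_proj_eq_ite_smul hP hU horth hE, if_true]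
    _ = P := by rw [hTP, mul_one, hP.isIdempotentElem.eq]

theorem recovery_comp_kraus_eq_self (hP : IsStarProjection P)
    (hU : ∀ a, star (U a) * U a = 1) (horth : ∀ a b, a ≠ b → P * star (U a) * U b * P = 0)
    (hE : ∀ a, E a * P = c a • (U a * P)) (hTP : ∑ a, star (E a) * E a = 1)
    {σ : A} (hσ : σ = P * σ * P) :
    (∑ a, recoveryKraus U P a * (∑ b, E b * σ * star (E b)) * star (recoveryKraus U P a)) +
      recoveryComplement U P * (∑ b, E b * σ * star (E b)) * star (recoveryComplement U P)
      = σ := by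
  have hweights : (∑ b, star (c b) * c b) • σ = σ := by
    conv_lhs => rw [hσ, ← smul_mul_assoc, ← smul_mul_assoc,
      sum_smul_proj_eq_proj hP hU horth hE hTP]
    exact hσ.symm
  simp only [conj_eq_of_mul_proj_eq_smul hP.isSelfAdjoint (hE _) hσ, mul_sum, sum_mul,
    mul_smul_comm, smul_mul_assoc]
  rw [sum_comm, ← sum_add_distrib]
  simp only [← smul_sum, ← smul_add, recovery_comp_unitary_conj_eq_self hP hU horth hσ]
  rw [← sum_smul, hweights]

end Algebra

/-- Motivating case of Standard QEC: if each `E_a` restricted to `C` is a scalar multiple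
`c_a U_a` of a unitary, with the subspaces `U_a C` mutually orthogonal, then the operators
`{U_a† P_a}` (with `P_a` the projection onto `U_a C`), padded by one further Kraus operator
supported on the complement of `⊕_a U_a C`, give a quantum operation `R` correcting `E` on
`B(C)`; moreover `P E_a† E_b P = δ_{ab} |c_a|² P`, so `Λ` is positive and diagonal. -/
theorem unitary_error_model_correction {d ι : Type} [Fintype d] [DecidableEq d]
    [Fintype ι] [DecidableEq ι]
    (P : Matrix d d ℂ) (hPproj : P * P = P) (hPsa : Pᴴ = P)
    (Eop : Matrix d d ℂ →ₗ[ℂ] Matrix d d ℂ)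
    (E : ι → Matrix d d ℂ)
    (hKraus : ∀ ρ, Eop ρ = ∑ a, E a * ρ * (E a)ᴴ)
    (hTP : ∑ a, (E a)ᴴ * E a = 1)
    (U : ι → Matrix d d ℂ) (c : ι → ℂ)
    (hU : ∀ a, (U a)ᴴ * U a = 1 ∧ U a * (U a)ᴴ = 1)
    (hrestrict : ∀ a, E a * P = c a • (U a * P))
    (horth : ∀ a b, a ≠ b → P * (U a)ᴴ * U b * P = 0)
    (Pa : ι → Matrix d d ℂ) (hPa : ∀ a, Pa a = U a * P * (U a)ᴴ) :
    (∃ Q : Matrix d d ℂ,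
      -- `Q` is supported on the complement of `⊕_a U_a C`
      Q * (∑ a, Pa a) = 0 ∧
      -- `{U_a† P_a} ∪ {Q}` is a trace-preserving Kraus family
      (∑ a, ((U a)ᴴ * Pa a)ᴴ * ((U a)ᴴ * Pa a)) + Qᴴ * Q = 1 ∧
      -- the resulting quantum operation `R` corrects `E` on `B(C)`
      (∀ σ : Matrix d d ℂ, σ = P * σ * P →
        (∑ a, ((U a)ᴴ * Pa a) * Eop σ * ((U a)ᴴ * Pa a)ᴴ) + Q * Eop σ * Qᴴ = σ)) ∧
    (∀ a b, P * (E a)ᴴ * E b * P =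
      (if a = b then (starRingEnd ℂ) (c a) * c a else 0) • P) ∧
    (Matrix.of fun a b : ι =>
      if a = b then (starRingEnd ℂ) (c a) * c a else 0).PosSemidef ∧
    (Matrix.of fun a b : ι =>
      if a = b then (starRingEnd ℂ) (c a) * c a else 0).IsDiag := by
  obtain rfl : Pa = fun a => U a * P * (U a)ᴴ := funext hPa
  have hP : IsStarProjection P := ⟨hPproj, hPsa⟩
  have hiso a : star (U a) * U a = 1 := (hU a).1
  have hunit a : U a ∈ unitary (Matrix d d ℂ) := Unitary.mem_iff.mpr (hU a)
  refine ⟨⟨recoveryComplement U P, ?_,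
      sum_star_recoveryKraus_mul_self_add_eq_one hP hunit horth, fun σ hσ => ?_⟩,
    proj_mul_star_mul_mul_proj_eq_ite_smul hP hiso horth hrestrict, ?_,
    Matrix.isDiag_diagonal _⟩
  · exact ((orthogonalIdempotents_conj hP hiso horth).isIdempotentElem_sum).one_sub_mul_self
  · rw [hKraus]
    exact recovery_comp_kraus_eq_self hP hiso horth hrestrict hTP hσ
  · exact Matrix.posSemidef_diagonal_iff.mpr fun a => star_mul_self_nonneg (c a)
end
end
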